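/- arXiv:1710.00393 — 5 statements merged into one kernel-verified Lean document; each statement's English description precedes it below -/
import Mathlib

section
/- Let G be a countable discrete group acting continuously on a compact metrizable space X, and let m ∈ ℕ. Then the action has m-comparison if and only if A ≺ₘ B for every closed set A ⊆ X and nonempty open set B ⊆ X satisfying μ(A) < μ(B) for all μ ∈ M_G(X). -/
open Pointwise MeasureTheory
open scoped ENNReal NNReal

namespace Kerr

section Basic

variable (G : Type) [Group G] (X : Type) [TopologicalSpace X] [MulAction G X]

/-- The action of `G` on `X` is free. -/
def IsFreeAction : Prop := ∀ (g : G) (x : X), g • x = x → g = 1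

/-- The action of `G` on `X` is minimal: there is no proper nonempty closed invariant subset. -/
def IsMinimalAction : Prop :=
  ∀ C : Set X, IsClosed C → (∀ g : G, g • C ⊆ C) → C = ∅ ∨ C = Set.univ

/-- `X` is zero-dimensional: it has a basis of clopen sets. -/
def ZeroDimensional : Prop :=
  ∀ (x : X) (U : Set X), IsOpen U → x ∈ U → ∃ V : Set X, IsClopen V ∧ x ∈ V ∧ V ⊆ U

/-- The dynamical subequivalence relation `A ≺ₘ B`: every closed subset `C` of `A` admits a
finite open cover `U` together with group elements `s u` and an `(m+1)`-colouring such that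
the translates `s u • u` are contained in `B` and are pairwise disjoint within each colour. -/
def SubEquivM (m : ℕ) (A B : Set X) : Prop :=
  ∀ C : Set X, IsClosed C → C ⊆ A →
    ∃ (U : Finset (Set X)) (s : Set X → G) (col : Set X → Fin (m + 1)),
      (∀ u ∈ U, IsOpen u) ∧
      (C ⊆ ⋃ u ∈ U, u) ∧
      (∀ u ∈ U, s u • u ⊆ B) ∧
      (∀ u ∈ U, ∀ v ∈ U, u ≠ v → col u = col v → Disjoint (s u • u) (s v • v))

/-- `(V, S)` is a tower: the translates `s • V`, `s ∈ S`, are pairwise disjoint. -/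
def IsTower (V : Set X) (S : Finset G) : Prop :=
  ∀ s ∈ S, ∀ t ∈ S, s ≠ t → Disjoint (s • V) (t • V)

/-- The union `S V` of the levels of the tower `(V, S)`. -/
def towerSpan (V : Set X) (S : Finset G) : Set X := ⋃ s ∈ S, s • V

/-- A castle: a family of towers whose spans `Sᵢ Vᵢ` are pairwise disjoint. -/
def IsCastle {I : Type} (V : I → Set X) (S : I → Finset G) : Prop :=
  (∀ i, IsTower G X (V i) (S i)) ∧
  ∀ i j : I, i ≠ j →
    Disjoint (towerSpan G X (V i) (S i)) (towerSpan G X (V j) (S j))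

/-- The collection of towers `{(Vᵢ, Sᵢ)}` covers `X`. -/
def TowersCover {I : Type} (V : I → Set X) (S : I → Finset G) : Prop :=
  (⋃ i, towerSpan G X (V i) (S i)) = Set.univ

/-- The collection of towers `{(Vᵢ, Sᵢ)}` is `E`-Lebesgue. -/
def IsLebesgueTowers {I : Type} (E : Finset G) (V : I → Set X) (S : I → Finset G) : Prop :=
  ∀ x : X, ∃ i : I, ∃ t ∈ S i, x ∈ t • V i ∧ ∀ e ∈ E, e * t ∈ S i

/-- The family `{Sᵢ Vᵢ}` has chromatic number at most `d`. -/
def ChromaticLE {I : Type} (V : I → Set X) (S : I → Finset G) (d : ℕ) : Prop :=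
  ∃ col : I → Fin d, ∀ i j : I, i ≠ j → col i = col j →
    Disjoint (towerSpan G X (V i) (S i)) (towerSpan G X (V j) (S j))

/-- `towdim(X, G) ≤ d`. -/
def TowDimLE (d : ℕ) : Prop :=
  ∀ E : Finset G, ∃ (I : Type) (V : I → Set X) (S : I → Finset G),
    (∀ i, IsOpen (V i)) ∧ (∀ i, IsTower G X (V i) (S i)) ∧
    TowersCover G X V S ∧ IsLebesgueTowers G X E V S ∧ ChromaticLE G X V S (d + 1)

/-- The tower dimension of the action, with value `⊤` if it is infinite. -/
noncomputable def towdim : ℕ∞ := sInf {n : ℕ∞ | ∃ d : ℕ, n = (d : ℕ∞) ∧ TowDimLE G X d}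

/-- A Borel measure on `X` is invariant under the `G`-action. -/
def InvariantMeasure [MeasurableSpace X] (μ : Measure X) : Prop :=
  ∀ g : G, Measure.map (fun x : X => g • x) μ = μ

/-- The action has `m`-comparison. -/
def HasComparisonM [MeasurableSpace X] (m : ℕ) : Prop :=
  ∀ A B : Set X, IsOpen A → IsOpen B → A.Nonempty → B.Nonempty →
    (∀ μ : Measure X, IsProbabilityMeasure μ → InvariantMeasure G X μ → μ A < μ B) →
    SubEquivM G X m A B

/-- `μ` is an ergodic `G`-invariant Borel probability measure, i.e. an extreme point of the
convex set of invariant Borel probability measures. -/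
def IsErgodicInvariant [MeasurableSpace X] (μ : Measure X) : Prop :=
  IsProbabilityMeasure μ ∧ InvariantMeasure G X μ ∧
  ∀ (μ₁ μ₂ : Measure X) (t : ℝ≥0∞),
    IsProbabilityMeasure μ₁ → InvariantMeasure G X μ₁ →
    IsProbabilityMeasure μ₂ → InvariantMeasure G X μ₂ →
    0 < t → t < 1 → μ = t • μ₁ + (1 - t) • μ₂ → μ₁ = μ ∧ μ₂ = μ

end Basic

section Cov

variable (X : Type) [TopologicalSpace X]

/-- The Lebesgue covering dimension of `X` is at most `d`. -/
def CovDimLE (d : ℕ) : Prop :=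
  ∀ U : Finset (Set X), (∀ u ∈ U, IsOpen u) → (⋃ u ∈ U, u) = Set.univ →
    ∃ V : Finset (Set X), (∀ v ∈ V, IsOpen v) ∧ ((⋃ v ∈ V, v) = Set.univ) ∧
      (∀ v ∈ V, ∃ u ∈ U, v ⊆ u) ∧
      ∀ x : X, ({v : Set X | v ∈ V ∧ x ∈ v}).ncard ≤ d + 1

/-- The Lebesgue covering dimension of `X`, with value `⊤` if it is infinite. -/
noncomputable def covdim : ℕ∞ := sInf {n : ℕ∞ | ∃ d : ℕ, n = (d : ℕ∞) ∧ CovDimLE X d}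

end Cov

section Folner

variable (G : Type) [Group G]

/-- `S` is a nonempty `(K, δ)`-invariant finite subset of `G`. -/
def FolnerInv [DecidableEq G] (K : Finset G) (δ : ℝ) (S : Finset G) : Prop :=
  S.Nonempty ∧ ∀ s ∈ K, ((symmDiff (s • S) S).card : ℝ) < δ * (S.card : ℝ)

/-- `G` is amenable: it satisfies the Følner condition. -/
def AmenableFolner [DecidableEq G] : Prop :=
  ∀ (K : Finset G) (δ : ℝ), 0 < δ → ∃ S : Finset G, FolnerInv G K δ S

/-- The asymptotic dimension of `G` is at most `d`. -/
def AsDimLE (d : ℕ) : Prop :=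
  ∀ E : Finset G, ∃ (𝒰 : Set (Set G)) (F : Finset G),
    (∀ g : G, {u : Set G | u ∈ 𝒰 ∧ g ∈ u}.Finite ∧
      {u : Set G | u ∈ 𝒰 ∧ g ∈ u}.ncard ≤ d + 1) ∧
    (∀ u ∈ 𝒰, ∃ t : G, u ⊆ (fun f : G => f * t) '' (F : Set G)) ∧
    (∀ t : G, ∃ u ∈ 𝒰, (fun e : G => e * t) '' (E : Set G) ⊆ u)

/-- The asymptotic dimension of `G`, with value `⊤` if it is infinite. -/
noncomputable def asdim : ℕ∞ := sInf {n : ℕ∞ | ∃ d : ℕ, n = (d : ℕ∞) ∧ AsDimLE G d}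

end Folner

section AmDimDad

variable (G : Type) [Group G] (X : Type) [TopologicalSpace X] [MulAction G X]

/-- The amenability dimension of the action is at most `d`: for every finite `F ⊆ G` and
`ε > 0` there is a continuous map `φ : X → Δ_d(G) ⊆ ℓ¹(G)` which is `(F, ε)`-approximately
equivariant. -/
def AmDimLE (d : ℕ) : Prop :=
  ∀ (F : Finset G) (ε : ℝ), 0 < ε →
    ∃ φ : X → lp (fun _ : G => ℝ) 1,
      Continuous φ ∧
      (∀ (x : X) (t : G), 0 ≤ (φ x : ∀ _ : G, ℝ) t) ∧
      (∀ x : X, (∑' t : G, (φ x : ∀ _ : G, ℝ) t) = 1) ∧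
      (∀ x : X, (Function.support (φ x : ∀ _ : G, ℝ)).Finite ∧
        (Function.support (φ x : ∀ _ : G, ℝ)).ncard ≤ d + 1) ∧
      ∀ s ∈ F, ∀ x : X,
        (∑' t : G, |(φ (s • x) : ∀ _ : G, ℝ) t - (φ x : ∀ _ : G, ℝ) (s⁻¹ * t)|) < ε

/-- The amenability dimension, with value `⊤` if it is infinite. -/
noncomputable def amdim : ℕ∞ := sInf {n : ℕ∞ | ∃ d : ℕ, n = (d : ℕ∞) ∧ AmDimLE G X d}

/-- The dynamic asymptotic dimension of the action is at most `d`. -/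
def DadLE (d : ℕ) : Prop :=
  ∀ E : Finset G, ∃ (F : Finset G) (U : Finset (Set X)),
    (∀ u ∈ U, IsOpen u) ∧ U.card = d + 1 ∧ ((⋃ u ∈ U, u) = Set.univ) ∧
    ∀ u ∈ U, ∀ x ∈ u, ∀ l : List G, (∀ s ∈ l, s ∈ E) →
      (∀ k ≤ l.length, (l.take k).foldl (fun (y : X) (s : G) => s • y) x ∈ u) →
      (l.foldl (fun (g : G) (s : G) => s * g) 1) ∈ F

/-- The dynamic asymptotic dimension, with value `⊤` if it is infinite. -/
noncomputable def daddim : ℕ∞ := sInf {n : ℕ∞ | ∃ d : ℕ, n = (d : ℕ∞) ∧ DadLE G X d}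

end AmDimDad

section MetricDefs

variable (G : Type) [Group G] (X : Type) [MetricSpace X] [MulAction G X]

/-- The fine tower dimension of the action is at most `d`. -/
def FTowDimLE (d : ℕ) : Prop :=
  ∀ (E : Finset G) (δ : ℝ), 0 < δ →
    ∃ (I : Type) (V : I → Set X) (S : I → Finset G),
      (∀ i, IsOpen (V i)) ∧ (∀ i, IsTower G X (V i) (S i)) ∧
      TowersCover G X V S ∧ IsLebesgueTowers G X E V S ∧
      (∀ i, ∀ s ∈ S i, Metric.diam (s • V i) < δ) ∧
      ChromaticLE G X V S (d + 1)

/-- The fine tower dimension, with value `⊤` if it is infinite. -/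
noncomputable def ftowdim : ℕ∞ := sInf {n : ℕ∞ | ∃ d : ℕ, n = (d : ℕ∞) ∧ FTowDimLE G X d}

variable [DecidableEq G]

/-- The action is almost finite. -/
def AlmostFinite : Prop :=
  ∀ (n : ℕ) (K : Finset G) (δ : ℝ), 0 < n → 0 < δ →
    ∃ (I : Type) (_ : Fintype I) (V : I → Set X) (S S' : I → Finset G),
      (∀ i, IsOpen (V i)) ∧ IsCastle G X V S ∧
      (∀ i, FolnerInv G K δ (S i)) ∧
      (∀ i, ∀ s ∈ S i, Metric.diam (s • V i) < δ) ∧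
      (∀ i, S' i ⊆ S i) ∧
      (∀ i, ((S' i).card : ℝ) < ((S i).card : ℝ) / (n : ℝ)) ∧
      SubEquivM G X 0 (Set.univ \ ⋃ i, towerSpan G X (V i) (S i))
        (⋃ i, towerSpan G X (V i) (S' i))

/-- The action is `m`-almost finite. -/
def MAlmostFinite (m : ℕ) : Prop :=
  ∀ (n : ℕ) (K : Finset G) (δ : ℝ), 0 < n → 0 < δ →
    ∃ (I : Type) (V : I → Set X) (S S' : I → Finset G),
      (∀ i, IsOpen (V i)) ∧ (∀ i, IsTower G X (V i) (S i)) ∧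
      (∀ i, FolnerInv G K δ (S i)) ∧
      (∀ i, ∀ s ∈ S i, Metric.diam (s • V i) < δ) ∧
      ChromaticLE G X V S (m + 1) ∧
      (∀ i, S' i ⊆ S i) ∧
      (∀ i, ((S' i).card : ℝ) < ((S i).card : ℝ) / (n : ℝ)) ∧
      SubEquivM G X 0 (Set.univ \ ⋃ i, towerSpan G X (V i) (S i))
        (⋃ i, towerSpan G X (V i) (S' i))

/-- The action is coarsely almost finite. -/
def CoarselyAlmostFinite : Prop :=
  ∀ (n : ℕ) (K : Finset G) (δ : ℝ), 0 < n → 0 < δ →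
    ∃ (I : Type) (_ : Fintype I) (V : I → Set X) (S S' : I → Finset G),
      (∀ i, IsOpen (V i)) ∧ (∀ i, IsTower G X (V i) (S i)) ∧
      IsCastle G X (fun i => closure (V i)) S ∧
      (∀ i, FolnerInv G K δ (S i)) ∧
      (∀ i, S' i ⊆ S i) ∧
      (∀ i, ((S' i).card : ℝ) < ((S i).card : ℝ) / (n : ℝ)) ∧
      SubEquivM G X 0 (Set.univ \ ⋃ i, towerSpan G X (V i) (S i))
        (⋃ i, towerSpan G X (V i) (S' i))

end MetricDefs

section TypeSemigroup

variable (G : Type) [Group G] (X : Type) [TopologicalSpace X] [MulAction G X]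

/-- The elementary relation of dynamical equidecomposability on `C(X, ℤ≥0)`:
`f ∼ g` if `f = Σ hₖ` and `g = Σ α_{sₖ}(hₖ)` for continuous `hₖ : X → ℕ` and `sₖ ∈ G`. -/
def TypeRel (f g : X → ℕ) : Prop :=
  ∃ (n : ℕ) (h : Fin n → X → ℕ) (s : Fin n → G),
    (∀ k, Continuous (h k)) ∧
    (∀ x : X, (∑ k, h k x) = f x) ∧
    (∀ x : X, (∑ k, h k ((s k)⁻¹ • x)) = g x)

/-- The equivalence relation defining the clopen type semigroup `S(X, G)`. -/
def TypeEquiv : (X → ℕ) → (X → ℕ) → Prop := Relation.EqvGen (TypeRel G X)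

/-- The algebraic order on the type semigroup: `[f] ≤ [g]` iff `[f] + [h] = [g]` for some `h`. -/
def TypeLE (f g : X → ℕ) : Prop :=
  ∃ h : X → ℕ, Continuous h ∧ TypeEquiv G X (fun x => f x + h x) g

/-- The type semigroup `S(X, G)` is almost unperforated. -/
def TypeAlmostUnperforated : Prop :=
  ∀ f g : X → ℕ, Continuous f → Continuous g →
    ∀ n : ℕ, TypeLE G X (fun x => (n + 1) * f x) (fun x => n * g x) → TypeLE G X f g

end TypeSemigroup

end Kerr

/-!
A closed set `A` with `μ A < μ B` for all invariant probability measures `μ` has an open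
neighbourhood with the same property: otherwise invariant measures `μₙ` with
`μₙ B ≤ μₙ (thickening (1/(n+1)) A)` accumulate, in the compact space of probability measures, at an
invariant `ν`, and the portmanteau theorem gives `ν B ≤ ν (cthickening r A)` for all `r > 0`, hence
`ν B ≤ ν A`. Comparison for that open neighbourhood then covers `A`.
-/

namespace Kerr

open Filter Topology Metric Set

section Portmanteau

variable {X : Type*} [TopologicalSpace X] [MeasurableSpace X] [OpensMeasurableSpace X]
  [HasOuterApproxClosed X]

theorem ProbabilityMeasure.measure_le_of_tendsto {ι : Type*} {L : Filter ι} [L.NeBot]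
    {μs : ι → ProbabilityMeasure X} {ν : ProbabilityMeasure X} (hlim : Tendsto μs L (𝓝 ν))
    {B F : Set X} (hB : IsOpen B) (hF : IsClosed F)
    (hle : ∀ᶠ i in L, (μs i : Measure X) B ≤ (μs i : Measure X) F) :
    (ν : Measure X) B ≤ (ν : Measure X) F :=
  calc (ν : Measure X) B ≤ L.liminf fun i ↦ (μs i : Measure X) B :=
        ProbabilityMeasure.le_liminf_measure_open_of_tendsto hlim hB
    _ ≤ L.liminf fun i ↦ (μs i : Measure X) F := liminf_le_liminf hle
    _ ≤ L.limsup fun i ↦ (μs i : Measure X) F := liminf_le_limsup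
    _ ≤ (ν : Measure X) F := ProbabilityMeasure.limsup_measure_closed_le_of_tendsto hlim hF

end Portmanteau

theorem exists_isOpen_superset_measure_lt {X : Type*} [TopologicalSpace X] [CompactSpace X]
    [TopologicalSpace.MetrizableSpace X] [MeasurableSpace X] [BorelSpace X]
    {𝓢 : Set (ProbabilityMeasure X)} (h𝓢 : IsClosed 𝓢) {C B : Set X} (hC : IsClosed C)
    (hB : IsOpen B) (hCB : ∀ μ ∈ 𝓢, (μ : Measure X) C < (μ : Measure X) B) :
    ∃ U, IsOpen U ∧ C ⊆ U ∧ ∀ μ ∈ 𝓢, (μ : Measure X) U < (μ : Measure X) B := by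
  let := TopologicalSpace.metrizableSpaceMetric X
  by_contra! hcon
  have hδ : ∀ n : ℕ, (0 : ℝ) < 1 / (n + 1) := fun n ↦ Nat.one_div_pos_of_nat
  choose μ hμ𝓢 hμ using fun n : ℕ ↦
    hcon (thickening (1 / (n + 1)) C) isOpen_thickening (self_subset_thickening (hδ n) C)
  let 𝒰 : Ultrafilter ℕ := Ultrafilter.of atTop
  let ν := (𝒰.map μ).lim
  have hlim : Tendsto μ 𝒰 (𝓝 ν) := (𝒰.map μ).le_nhds_lim
  have hν𝓢 : ν ∈ 𝓢 := h𝓢.mem_of_tendsto hlim (Eventually.of_forall hμ𝓢)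
  have hνr : ∀ r > 0, (ν : Measure X) B ≤ (ν : Measure X) (cthickening r C) := by
    intro r hr
    obtain ⟨N, hN⟩ := exists_nat_one_div_lt hr
    refine ProbabilityMeasure.measure_le_of_tendsto hlim hB isClosed_cthickening
      (((eventually_ge_atTop N).filter_mono (Ultrafilter.of_le _)).mono fun n hn ↦ ?_)
    refine (hμ n).trans (measure_mono (thickening_subset_cthickening_of_le ?_ C))
    exact (Nat.one_div_le_one_div hn).trans hN.le
  have hνC : (ν : Measure X) B ≤ (ν : Measure X) C :=
    ge_of_tendsto ((tendsto_measure_cthickening_of_isClosed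
      ⟨1, one_pos, measure_ne_top _ _⟩ hC).mono_left (nhdsWithin_le_nhds (s := Ioi 0)))
      (eventually_nhdsWithin_of_forall hνr)
  exact (hCB ν hν𝓢).not_ge hνC

section Dynamics

variable {G X : Type} [Group G] [TopologicalSpace X] [MulAction G X]

theorem SubEquivM.mono_left {m : ℕ} {A A' B : Set X} (h : SubEquivM G X m A B) (hA : A' ⊆ A) :
    SubEquivM G X m A' B :=
  fun C hC hCA ↦ h C hC (hCA.trans hA)

theorem subEquivM_empty_left (m : ℕ) (B : Set X) : SubEquivM G X m ∅ B := by
  intro C _ hC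
  refine ⟨∅, fun _ ↦ 1, fun _ ↦ 0, by simp, ?_, by simp, by simp⟩
  simpa using hC

theorem subEquivM_of_forall_isClosed {m : ℕ} {A B : Set X}
    (h : ∀ C, IsClosed C → C ⊆ A → SubEquivM G X m C B) : SubEquivM G X m A B :=
  fun C hC hCA ↦ h C hC hCA C hC subset_rfl

variable (G) in
theorem isClosed_setOf_invariantMeasure [MeasurableSpace X] [BorelSpace X] [HasOuterApproxClosed X]
    [ContinuousConstSMul G X] :
    IsClosed {μ : ProbabilityMeasure X | InvariantMeasure G X μ} := by
  simp only [InvariantMeasure, ofPred_forall]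
  refine isClosed_iInter fun g ↦ ?_
  have hg : Continuous fun x : X ↦ g • x := continuous_const_smul g
  convert isClosed_eq (ProbabilityMeasure.continuous_map hg) continuous_id using 1
  ext μ
  rw [mem_ofPred_eq, mem_ofPred_eq, id, ← ProbabilityMeasure.toMeasure_injective.eq_iff,
    ProbabilityMeasure.toMeasure_map]

end Dynamics

theorem hasComparisonM_iff_closed_open_general
    (G X : Type) [Group G]
    [TopologicalSpace X] [CompactSpace X] [TopologicalSpace.MetrizableSpace X]
    [MeasurableSpace X] [BorelSpace X]
    [MulAction G X] [ContinuousConstSMul G X] (m : ℕ) :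
    HasComparisonM G X m ↔
      ∀ A B : Set X, IsClosed A → IsOpen B → B.Nonempty →
        (∀ μ : Measure X, IsProbabilityMeasure μ → InvariantMeasure G X μ → μ A < μ B) →
        SubEquivM G X m A B := by
  constructor
  · intro hcomp A B hA hB hBne hAB
    rcases A.eq_empty_or_nonempty with rfl | hAne
    · exact subEquivM_empty_left m B
    obtain ⟨U, hU, hAU, hUB⟩ := exists_isOpen_superset_measure_lt
      (isClosed_setOf_invariantMeasure G) hA hB fun μ hμ ↦ hAB μ μ.prop hμ
    exact (hcomp U B hU hB (hAne.mono hAU) hBne fun μ hμ hinv ↦ hUB ⟨μ, hμ⟩ hinv).mono_left hAU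
  · intro h A B _ hB _ hBne hAB
    refine subEquivM_of_forall_isClosed fun C hC hCA ↦ h C B hC hB hBne fun μ hμ hinv ↦ ?_
    exact (measure_mono hCA).trans_lt (hAB μ hμ hinv)

/-- Proposition 3.4: `m`-comparison can be tested on closed sets against
nonempty open sets. -/
theorem hasComparisonM_iff_closed_open
    (G X : Type) [Group G] [Countable G]
    [TopologicalSpace X] [CompactSpace X] [TopologicalSpace.MetrizableSpace X]
    [MeasurableSpace X] [BorelSpace X]
    [MulAction G X] [ContinuousConstSMul G X] (m : ℕ) :
    HasComparisonM G X m ↔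
      ∀ A B : Set X, IsClosed A → IsOpen B → B.Nonempty →
        (∀ μ : Measure X, IsProbabilityMeasure μ → InvariantMeasure G X μ → μ A < μ B) →
        SubEquivM G X m A B :=
  hasComparisonM_iff_closed_open_general G X m

end Kerr
end

section
/- Let G be a countable discrete group acting continuously on a compact metrizable zero-dimensional space X, let m ∈ ℕ, and let A and B be clopen subsets of X. Then A ≺ₘ B if and only if there exist a clopen partition 𝒫 of A, an s_U ∈ G for every U ∈ 𝒫, and a partition 𝒫 = 𝒫₀ ⊔ ⋯ ⊔ 𝒫ₘ such that for each i = 0,…,m the images s_U U for U ∈ 𝒫ᵢ are pairwise disjoint subsets of B. -/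
open Pointwise MeasureTheory
open scoped ENNReal NNReal

/-! A clopen `A` is compact, so a witness of `A ≺ₘ B` for `C = A` is a finite open cover of `A`.
Zero-dimensionality refines it to a finite clopen cover, which disjointifies into a clopen
partition of `A`. Each piece takes the group element and colour of a cover member containing it:
pieces below the same member are disjoint and are moved by the same group element, so their
translates stay disjoint. Conversely, a clopen partition of `A` is an open cover of every `C ⊆ A`. -/

namespace Kerr

section ClopenPartition

variable {X : Type} [TopologicalSpace X]

theorem ZeroDimensional.exists_clopen_cover_subordinate (hzd : ZeroDimensional X)
    {A : Set X} (hA : IsClopen A) (hAc : IsCompact A) {U : Finset (Set X)}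
    (hU : ∀ u ∈ U, IsOpen u) (hAU : A ⊆ ⋃ u ∈ U, u) :
    ∃ T : Finset (Set X), (∀ w ∈ T, IsClopen w) ∧ (⋃ w ∈ T, w) = A ∧
      ∀ w ∈ T, ∃ u ∈ U, w ⊆ u := by
  classical
  have hloc : ∀ x ∈ A, ∃ V, IsClopen V ∧ x ∈ V ∧ ∃ u ∈ U, V ⊆ u := by
    intro x hx
    obtain ⟨u, hu, hxu⟩ := Set.mem_iUnion₂.mp (hAU hx)
    obtain ⟨V, hV, hxV, hVu⟩ := hzd x u (hU u hu) hxu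
    exact ⟨V, hV, hxV, u, hu, hVu⟩
  choose! V hVc hxV hVU using hloc
  obtain ⟨t, htA, hAt⟩ := hAc.elim_nhds_subcover (fun x => V x ∩ A)
    fun x hx => ((hVc x hx).inter hA).isOpen.mem_nhds ⟨hxV x hx, hx⟩
  refine ⟨t.image fun x => V x ∩ A, ?_, ?_, ?_⟩
  · simp only [Finset.mem_image]
    rintro _ ⟨x, hx, rfl⟩
    exact (hVc x (htA x hx)).inter hA
  · rw [Finset.set_biUnion_finset_image]
    exact subset_antisymm (Set.iUnion₂_subset fun _ _ => Set.inter_subset_right) hAt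
  · simp only [Finset.mem_image]
    rintro _ ⟨x, hx, rfl⟩
    obtain ⟨u, hu, hVu⟩ := hVU x (htA x hx)
    exact ⟨u, hu, Set.inter_subset_left.trans hVu⟩

theorem exists_pairwise_disjoint_clopen_refinement (T : Finset (Set X))
    (hT : ∀ w ∈ T, IsClopen w) :
    ∃ P : Finset (Set X), (∀ p ∈ P, IsClopen p) ∧ (P : Set (Set X)).Pairwise Disjoint ∧
      (⋃ p ∈ P, p) = (⋃ w ∈ T, w) ∧ ∀ p ∈ P, ∃ w ∈ T, p ⊆ w := by
  classical
  set f : Fin T.card → Set X := fun k => T.equivFin.symm k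
  have hf : ∀ k, IsClopen (f k) := fun k => hT _ (T.equivFin.symm k).2
  refine ⟨Finset.univ.image (disjointed f), ?_, ?_, ?_, ?_⟩
  · simp only [Finset.mem_image, Finset.mem_univ, true_and]
    rintro _ ⟨k, rfl⟩
    exact disjointedRec (fun _ i ht => ht.diff (hf i)) (hf k)
  · simp only [Finset.coe_image, Finset.coe_univ, Set.image_univ]
    rintro _ ⟨i, rfl⟩ _ ⟨j, rfl⟩ hne
    exact disjoint_disjointed f (ne_of_apply_ne _ hne)
  · calc (⋃ p ∈ Finset.univ.image (disjointed f), p) = ⋃ k, f k := by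
          simp only [Finset.set_biUnion_finset_image, Finset.mem_univ, Set.iUnion_true,
            iUnion_disjointed]
      _ = ⋃ w ∈ T, w := by
          rw [T.equivFin.symm.surjective.iUnion_comp (fun w : T => (w : Set X)), Set.iUnion_subtype]
  · simp only [Finset.mem_image, Finset.mem_univ, true_and]
    rintro _ ⟨k, rfl⟩
    exact ⟨f k, (T.equivFin.symm k).2, disjointed_subset f k⟩

theorem ZeroDimensional.exists_clopen_partition_subordinate (hzd : ZeroDimensional X)
    {A : Set X} (hA : IsClopen A) (hAc : IsCompact A) {U : Finset (Set X)}
    (hU : ∀ u ∈ U, IsOpen u) (hAU : A ⊆ ⋃ u ∈ U, u) :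
    ∃ P : Finset (Set X), (∀ p ∈ P, IsClopen p) ∧ (P : Set (Set X)).Pairwise Disjoint ∧
      (⋃ p ∈ P, p) = A ∧ ∀ p ∈ P, ∃ u ∈ U, p ⊆ u := by
  obtain ⟨T, hTc, hTA, hTU⟩ := hzd.exists_clopen_cover_subordinate hA hAc hU hAU
  obtain ⟨P, hPc, hPd, hPT, hPW⟩ := exists_pairwise_disjoint_clopen_refinement T hTc
  refine ⟨P, hPc, hPd, hPT.trans hTA, fun p hp => ?_⟩
  obtain ⟨w, hw, hpw⟩ := hPW p hp
  obtain ⟨u, hu, hwu⟩ := hTU w hw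
  exact ⟨u, hu, hpw.trans hwu⟩

end ClopenPartition

theorem translates_of_refinement {G X κ : Type} [Group G] [MulAction G X] {B : Set X}
    {U P : Finset (Set X)} {s : Set X → G} {col : Set X → κ}
    (hsB : ∀ u ∈ U, s u • u ⊆ B)
    (hdisj : ∀ u ∈ U, ∀ v ∈ U, u ≠ v → col u = col v → Disjoint (s u • u) (s v • v))
    (hP : (P : Set (Set X)).Pairwise Disjoint) {f : Set X → Set X}
    (hfU : ∀ p ∈ P, f p ∈ U) (hPf : ∀ p ∈ P, p ⊆ f p) :
    (∀ p ∈ P, s (f p) • p ⊆ B) ∧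
      ∀ p ∈ P, ∀ q ∈ P, p ≠ q → col (f p) = col (f q) →
        Disjoint (s (f p) • p) (s (f q) • q) := by
  refine ⟨fun p hp => (Set.smul_set_mono (hPf p hp)).trans (hsB _ (hfU p hp)),
    fun p hp q hq hpq hcol => ?_⟩
  by_cases hf : f p = f q
  · rw [hf]
    exact Set.disjoint_smul_set.mpr (hP hp hq hpq)
  · exact (hdisj _ (hfU p hp) _ (hfU q hq) hf hcol).mono
      (Set.smul_set_mono (hPf p hp)) (Set.smul_set_mono (hPf q hq))

theorem subEquivM_iff_clopen_partition_general
    (G X : Type) [Group G]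
    [TopologicalSpace X] [CompactSpace X]
    [MulAction G X]
    (hzd : ZeroDimensional X) (m : ℕ)
    (A B : Set X) (hA : IsClopen A) :
    SubEquivM G X m A B ↔
      ∃ (P : Finset (Set X)) (s : Set X → G) (col : Set X → Fin (m + 1)),
        (∀ u ∈ P, IsClopen u) ∧
        (∀ u ∈ P, ∀ v ∈ P, u ≠ v → Disjoint u v) ∧
        ((⋃ u ∈ P, u) = A) ∧
        (∀ u ∈ P, s u • u ⊆ B) ∧
        (∀ u ∈ P, ∀ v ∈ P, u ≠ v → col u = col v → Disjoint (s u • u) (s v • v)) := by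
  constructor
  · intro h
    obtain ⟨U, s, col, hUo, hAU, hsB, hdisj⟩ := h A hA.isClosed subset_rfl
    obtain ⟨P, hPc, hPd, hPA, hPU⟩ :=
      hzd.exists_clopen_partition_subordinate hA hA.isClosed.isCompact hUo hAU
    choose! f hfU hPf using hPU
    exact ⟨P, s ∘ f, col ∘ f, hPc, fun u hu v hv => hPd hu hv, hPA,
      translates_of_refinement hsB hdisj hPd hfU hPf⟩
  · rintro ⟨P, s, col, hPc, -, hPA, hsB, hdisj⟩ C - hCA
    exact ⟨P, s, col, fun u hu => (hPc u hu).isOpen, hPA ▸ hCA, hsB, hdisj⟩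

/-- Proposition 3.5: on a zero-dimensional space, subequivalence of clopen sets
can be witnessed by a clopen partition. -/
theorem subEquivM_iff_clopen_partition
    (G X : Type) [Group G] [Countable G]
    [TopologicalSpace X] [CompactSpace X] [TopologicalSpace.MetrizableSpace X]
    [MulAction G X] [ContinuousConstSMul G X]
    (hzd : ZeroDimensional X) (m : ℕ)
    (A B : Set X) (hA : IsClopen A) (hB : IsClopen B) :
    SubEquivM G X m A B ↔
      ∃ (P : Finset (Set X)) (s : Set X → G) (col : Set X → Fin (m + 1)),
        (∀ u ∈ P, IsClopen u) ∧
        (∀ u ∈ P, ∀ v ∈ P, u ≠ v → Disjoint u v) ∧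
        ((⋃ u ∈ P, u) = A) ∧
        (∀ u ∈ P, s u • u ⊆ B) ∧
        (∀ u ∈ P, ∀ v ∈ P, u ≠ v → col u = col v → Disjoint (s u • u) (s v • v)) :=
  subEquivM_iff_clopen_partition_general G X hzd m A B hA

end Kerr
end

section
/- Let G be a countable discrete group acting freely and continuously on a compact metrizable space X. Then towdim⁺(X,G) ≤ ftowdim⁺(X,G) ≤ towdim⁺(X,G) · dim⁺(X), where the superscript +1 denotes the dimension plus one. In particular, ftowdim(X,G) < ∞ if and only if towdim(X,G) < ∞ and dim(X) < ∞. -/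
open Pointwise MeasureTheory
open scoped ENNReal NNReal

/-!
Fine towers are towers, and the levels of finitely many of them form an open cover of small
mesh in which a point meets at most one level per colour; hence `towdim ≤ ftowdim` and
`dim ≤ ftowdim`. Conversely, by Ostrand's theorem a compact metric space of dimension `c` has
open covers of arbitrarily small mesh that split into `c + 1` disjoint subfamilies.
Intersecting the bases of finitely many `E`-Lebesgue towers with such a cover keeps them
`E`-Lebesgue, makes all levels small because the finitely many translations involved are
uniformly continuous, and colours the new towers by pairs of colours: `towdim⁺ · dim⁺` of them.
-/

namespace Kerr

section DimOf

/-- `towdim`, `ftowdim` and `covdim` unfold to `dimOf` of their `…LE` predicates. -/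
noncomputable def dimOf (P : ℕ → Prop) : ℕ∞ := sInf {n : ℕ∞ | ∃ d : ℕ, n = d ∧ P d}

variable {P Q R : ℕ → Prop}

lemma dimOf_le {d : ℕ} (h : P d) : dimOf P ≤ d := sInf_le ⟨d, rfl, h⟩

lemma dimOf_mono (h : ∀ d, Q d → P d) : dimOf P ≤ dimOf Q :=
  sInf_le_sInf fun _ ⟨d, hn, hd⟩ => ⟨d, hn, h d hd⟩

lemma dimOf_lt_top_iff : dimOf P < ⊤ ↔ ∃ d, P d := by
  refine ⟨fun h => ?_, fun ⟨d, hd⟩ => (dimOf_le hd).trans_lt (ENat.natCast_lt_top d)⟩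
  by_contra hP
  have hempty : {n : ℕ∞ | ∃ d : ℕ, n = d ∧ P d} = ∅ :=
    Set.eq_empty_of_forall_notMem fun _ ⟨d, _, hd⟩ => hP ⟨d, hd⟩
  simp [dimOf, hempty] at h

lemma exists_dimOf_eq (h : ∃ d, P d) : ∃ d, P d ∧ dimOf P = d := by
  obtain ⟨d, hd, hP⟩ := csInf_mem (s := {n : ℕ∞ | ∃ d : ℕ, n = d ∧ P d})
    (let ⟨d, hd⟩ := h; ⟨d, d, rfl, hd⟩)
  exact ⟨d, hP, hd⟩

lemma dimOf_add_one_le_mul (h : ∀ a b, P a → Q b → R (a * b + a + b)) :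
    dimOf R + 1 ≤ (dimOf P + 1) * (dimOf Q + 1) := by
  by_cases hP : ∃ a, P a
  swap
  · rw [← dimOf_lt_top_iff, not_lt_top_iff] at hP
    simp [hP]
  by_cases hQ : ∃ b, Q b
  swap
  · rw [← dimOf_lt_top_iff, not_lt_top_iff] at hQ
    simp [hQ]
  obtain ⟨a, ha, hPa⟩ := exists_dimOf_eq hP
  obtain ⟨b, hb, hQb⟩ := exists_dimOf_eq hQ
  calc dimOf R + 1 ≤ ((a * b + a + b : ℕ) : ℕ∞) + 1 := by gcongr; exact dimOf_le (h a b ha hb)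
    _ = (dimOf P + 1) * (dimOf Q + 1) := by rw [hPa, hQb]; push_cast; ring

end DimOf

section Towers

variable {G : Type} [Group G] {X : Type} [MulAction G X]
  {I J : Type} {V : I → Set X} {S : I → Finset G}

@[simp]
lemma mem_towerSpan {V : Set X} {S : Finset G} {x : X} :
    x ∈ towerSpan G X V S ↔ ∃ s ∈ S, x ∈ s • V := by
  simp [towerSpan]

lemma IsTower.mono {V W : Set X} {S : Finset G} (h : IsTower G X V S) (hWV : W ⊆ V) :
    IsTower G X W S := fun s hs t ht hst =>
  (h s hs t ht hst).mono (Set.smul_set_mono hWV) (Set.smul_set_mono hWV)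

lemma IsLebesgueTowers.towersCover {E : Finset G} (h : IsLebesgueTowers G X E V S) :
    TowersCover G X V S :=
  Set.eq_univ_of_forall fun x =>
    let ⟨i, t, ht, hx, _⟩ := h x
    Set.mem_iUnion.2 ⟨i, mem_towerSpan.2 ⟨t, ht, hx⟩⟩

lemma IsLebesgueTowers.inter {E : Finset G} (h : IsLebesgueTowers G X E V S) {W : J → Set X}
    (hW : (⋃ j, W j) = Set.univ) :
    IsLebesgueTowers G X E (fun p : I × J => V p.1 ∩ W p.2) (fun p => S p.1) := by
  intro x
  obtain ⟨i, t, ht, hx, hEt⟩ := h x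
  obtain ⟨j, hj⟩ := Set.mem_iUnion.1 (hW ▸ Set.mem_univ (t⁻¹ • x))
  refine ⟨(i, j), t, ht, ?_, hEt⟩
  rw [Set.mem_smul_set_iff_inv_smul_mem] at hx ⊢
  exact ⟨hx, hj⟩

lemma ChromaticLE.comp {n : ℕ} (h : ChromaticLE G X V S n) {f : J → I}
    (hf : Function.Injective f) : ChromaticLE G X (fun j => V (f j)) (fun j => S (f j)) n :=
  let ⟨col, hcol⟩ := h
  ⟨fun j => col (f j), fun _ _ hne => hcol _ _ (hf.ne hne)⟩

lemma ChromaticLE.inter {m n : ℕ} (htow : ∀ i, IsTower G X (V i) (S i))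
    (h : ChromaticLE G X V S m) {W : J → Set X} (colW : J → Fin n)
    (hW : ∀ j j', j ≠ j' → colW j = colW j' → Disjoint (W j) (W j')) :
    ChromaticLE G X (fun p : I × J => V p.1 ∩ W p.2) (fun p => S p.1) (m * n) := by
  obtain ⟨col, hcol⟩ := h
  refine ⟨fun p => finProdFinEquiv (col p.1, colW p.2), fun ⟨i, j⟩ ⟨i', j'⟩ hpq hpq' => ?_⟩
  simp only [EmbeddingLike.apply_eq_iff_eq, Prod.mk.injEq] at hpq'
  by_cases hii : i = i'
  · subst hii
    have hjj : j ≠ j' := fun h => hpq (by rw [h])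
    refine Set.disjoint_iUnion₂_left.2 fun s hs => Set.disjoint_iUnion₂_right.2 fun t ht => ?_
    by_cases hst : s = t
    · subst hst
      exact Set.disjoint_smul_set.2 <|
        (hW j j' hjj hpq'.2).mono Set.inter_subset_right Set.inter_subset_right
    · exact (htow i s hs t ht hst).mono (Set.smul_set_mono Set.inter_subset_left)
        (Set.smul_set_mono Set.inter_subset_left)
  · exact (hcol i i' hii hpq'.1).mono
      (Set.biUnion_mono subset_rfl fun s _ => Set.smul_set_mono Set.inter_subset_left)
      (Set.biUnion_mono subset_rfl fun s _ => Set.smul_set_mono Set.inter_subset_left)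

lemma ChromaticLE.encard_levels_le {n : ℕ} (htow : ∀ i, IsTower G X (V i) (S i))
    (h : ChromaticLE G X V S n) (x : X) :
    {p : I × G | p.2 ∈ S p.1 ∧ x ∈ p.2 • V p.1}.encard ≤ n := by
  obtain ⟨col, hcol⟩ := h
  have hinj : Set.InjOn (fun p => col p.1) {p : I × G | p.2 ∈ S p.1 ∧ x ∈ p.2 • V p.1} := by
    rintro ⟨i, s⟩ ⟨hs, hxs⟩ ⟨i', t⟩ ⟨ht, hxt⟩ hcol'
    by_cases hii : i = i'
    · subst hii
      by_contra hst
      exact Set.disjoint_left.1 (htow i s hs t ht fun h => hst (by rw [h])) hxs hxt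
    · exact (Set.disjoint_left.1 (hcol i i' hii hcol') (mem_towerSpan.2 ⟨s, hs, hxs⟩)
        (mem_towerSpan.2 ⟨t, ht, hxt⟩)).elim
  simpa using Set.encard_le_encard_of_injOn (Set.mapsTo_univ _ _) hinj

end Towers

section Decomposition

open Metric

variable {X : Type} [PseudoEMetricSpace X]

/-- The depth of `x` in `v` is `infEDist x vᶜ`; unlike `infDist`, it is `⊤` rather than `0`
for `v = univ`. -/
def leadingSet (V σ : Finset (Set X)) : Set X :=
  {x | ∀ v ∈ σ, 0 < infEDist x vᶜ ∧ ∀ u ∈ V \ σ, infEDist x uᶜ < infEDist x vᶜ}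

lemma isOpen_leadingSet (V σ : Finset (Set X)) : IsOpen (leadingSet V σ) := by
  simp only [leadingSet, Set.ofPred_forall, Set.ofPred_and]
  exact isOpen_biInter_finset fun v _ =>
    (isOpen_lt continuous_const continuous_infEDist).inter <|
      isOpen_biInter_finset fun u _ => isOpen_lt continuous_infEDist continuous_infEDist

lemma leadingSet_subset {V σ : Finset (Set X)} {v : Set X} (hv : v ∈ σ) :
    leadingSet V σ ⊆ v := fun x hx => by
  by_contra hxv
  exact (hx v hv).1.ne' (infEDist_zero_of_mem hxv)

/-- Two leading sets of the same size are disjoint: on their intersection a member of one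
would have to be both deeper and shallower than a member of the other. -/
lemma disjoint_leadingSet {V σ τ : Finset (Set X)} (hσ : σ ⊆ V) (hτ : τ ⊆ V) (hne : σ ≠ τ)
    (hcard : σ.card = τ.card) : Disjoint (leadingSet V σ) (leadingSet V τ) := by
  obtain ⟨v, hvσ, hvτ⟩ := Finset.not_subset.1 fun h =>
    hne (Finset.eq_of_subset_of_card_le h hcard.ge)
  obtain ⟨u, huτ, huσ⟩ := Finset.not_subset.1 fun h =>
    hne (Finset.eq_of_subset_of_card_le h hcard.le).symm
  refine Set.disjoint_left.2 fun x hxσ hxτ => lt_asymm ((hxσ v hvσ).2 u ?_) ((hxτ u huτ).2 v ?_)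
  · exact Finset.mem_sdiff.2 ⟨hτ huτ, huσ⟩
  · exact Finset.mem_sdiff.2 ⟨hσ hvσ, hvτ⟩

/-- The members of `V` of maximal depth at `x` form a leading set containing `x`. -/
lemma exists_mem_leadingSet {V : Finset (Set X)} (hV : ∀ v ∈ V, IsOpen v) {x : X}
    (hx : x ∈ ⋃ v ∈ V, v) : ∃ σ ⊆ V, σ.Nonempty ∧ x ∈ leadingSet V σ := by
  classical
  obtain ⟨v₀, hv₀, hxv₀⟩ := Set.mem_iUnion₂.1 hx
  obtain ⟨w, hw, hmax⟩ := V.exists_max_image (fun v => infEDist x vᶜ) ⟨v₀, hv₀⟩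
  have hpos : 0 < infEDist x wᶜ := by
    refine lt_of_lt_of_le ?_ (hmax v₀ hv₀)
    rw [infEDist_pos_iff_notMem_closure, (hV v₀ hv₀).isClosed_compl.closure_eq]
    exact not_not.2 hxv₀
  refine ⟨V.filter fun v => infEDist x vᶜ = infEDist x wᶜ, Finset.filter_subset _ _,
    ⟨w, Finset.mem_filter.2 ⟨hw, rfl⟩⟩, fun v hv => ?_⟩
  rw [(Finset.mem_filter.1 hv).2]
  refine ⟨hpos, fun u hu => (hmax u (Finset.mem_sdiff.1 hu).1).lt_of_ne fun h => ?_⟩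
  exact (Finset.mem_sdiff.1 hu).2 (Finset.mem_filter.2 ⟨(Finset.mem_sdiff.1 hu).1, h⟩)

/-- Ostrand: colour the leading sets of a refinement of multiplicity `≤ c + 1` by their size. -/
lemma CovDimLE.exists_coloured_refinement {c : ℕ} (hc : CovDimLE X c)
    (U : Finset (Set X)) (hUo : ∀ u ∈ U, IsOpen u) (hUcov : (⋃ u ∈ U, u) = Set.univ) :
    ∃ (J : Type) (W : J → Set X) (col : J → Fin (c + 1)),
      (∀ j, IsOpen (W j)) ∧ (⋃ j, W j) = Set.univ ∧ (∀ j, ∃ u ∈ U, W j ⊆ u) ∧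
      ∀ j j', j ≠ j' → col j = col j' → Disjoint (W j) (W j') := by
  obtain ⟨V, hVo, hVcov, hVU, hVmult⟩ := hc U hUo hUcov
  refine ⟨{σ : Finset (Set X) // σ ⊆ V ∧ σ.Nonempty ∧ σ.card ≤ c + 1},
    fun σ => leadingSet V σ.1, fun σ => ⟨σ.1.card - 1, by omega⟩,
    fun σ => isOpen_leadingSet V σ.1, Set.eq_univ_of_forall fun x => ?_, fun σ => ?_,
    fun σ τ hne hcol => ?_⟩
  · obtain ⟨σ, hσV, hσ, hx⟩ := exists_mem_leadingSet hVo (hVcov.ge (Set.mem_univ x))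
    have hσx : (σ : Set (Set X)) ⊆ {v | v ∈ V ∧ x ∈ v} := fun v hv =>
      ⟨hσV hv, leadingSet_subset hv hx⟩
    have hcard : σ.card ≤ c + 1 := by
      simpa using (Set.ncard_le_ncard hσx (V.finite_toSet.subset fun _ hv => hv.1)).trans
        (hVmult x)
    exact Set.mem_iUnion.2 ⟨⟨σ, hσV, hσ, hcard⟩, hx⟩
  · obtain ⟨v, hv⟩ := σ.2.2.1
    obtain ⟨u, hu, hvu⟩ := hVU v (σ.2.1 hv)
    exact ⟨u, hu, (leadingSet_subset hv).trans hvu⟩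
  · have hσ := Finset.card_pos.2 σ.2.2.1
    have hτ := Finset.card_pos.2 τ.2.2.1
    have hcard := Fin.mk.inj_iff.1 hcol
    exact disjoint_leadingSet σ.2.1 τ.2.1 (Subtype.coe_ne_coe.2 hne) (by omega)

end Decomposition

lemma CovDimLE.exists_coloured_cover_diam_lt {X : Type} [MetricSpace X] [CompactSpace X] {c : ℕ}
    (hc : CovDimLE X c) {η : ℝ} (hη : 0 < η) :
    ∃ (J : Type) (W : J → Set X) (col : J → Fin (c + 1)),
      (∀ j, IsOpen (W j)) ∧ (⋃ j, W j) = Set.univ ∧ (∀ j, Metric.diam (W j) < η) ∧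
      ∀ j j', j ≠ j' → col j = col j' → Disjoint (W j) (W j') := by
  classical
  obtain ⟨t, ht⟩ := isCompact_univ.elim_finite_subcover (fun x : X => Metric.ball x (η / 3))
    (fun _ => Metric.isOpen_ball) fun x _ =>
      Set.mem_iUnion.2 ⟨x, Metric.mem_ball_self (by positivity)⟩
  obtain ⟨J, W, col, hWo, hWcov, hWU, hWdisj⟩ := hc.exists_coloured_refinement
    (t.image fun x => Metric.ball x (η / 3)) (by simp [Metric.isOpen_ball])
    (by simpa [Set.eq_univ_iff_forall] using fun x => ht (Set.mem_univ x))
  refine ⟨J, W, col, hWo, hWcov, fun j => ?_, hWdisj⟩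
  obtain ⟨_, hu, hWu⟩ := hWU j
  obtain ⟨x, -, rfl⟩ := Finset.mem_image.1 hu
  calc Metric.diam (W j) ≤ Metric.diam (Metric.ball x (η / 3)) :=
        Metric.diam_mono hWu Metric.isBounded_ball
    _ ≤ 2 * (η / 3) := Metric.diam_ball (by positivity)
    _ < η := by linarith

section Dimensions

variable {G : Type} [Group G] {X : Type} [MetricSpace X] [MulAction G X]

lemma FTowDimLE.towDimLE {d : ℕ} (h : FTowDimLE G X d) : TowDimLE G X d := fun E =>
  let ⟨I, V, S, hVo, htow, hcov, hleb, _, hchrom⟩ := h E 1 one_pos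
  ⟨I, V, S, hVo, htow, hcov, hleb, hchrom⟩

variable [CompactSpace X] [ContinuousConstSMul G X]

lemma IsLebesgueTowers.exists_finset {I : Type} {E : Finset G} {V : I → Set X}
    {S : I → Finset G} (hVo : ∀ i, IsOpen (V i)) (h : IsLebesgueTowers G X E V S) :
    ∃ ι : Finset I, IsLebesgueTowers G X E (fun i : ι => V i) (fun i : ι => S i) := by
  obtain ⟨ι, hι⟩ := isCompact_univ.elim_finite_subcover
    (fun i => ⋃ t ∈ {t | t ∈ S i ∧ ∀ e ∈ E, e * t ∈ S i}, t • V i)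
    (fun i => isOpen_biUnion fun t _ => (hVo i).smul t) fun x _ => by
      obtain ⟨i, t, ht, hx, hEt⟩ := h x
      exact Set.mem_iUnion.2 ⟨i, Set.mem_iUnion₂.2 ⟨t, ⟨ht, hEt⟩, hx⟩⟩
  refine ⟨ι, fun x => ?_⟩
  obtain ⟨i, hi, hx⟩ := Set.mem_iUnion₂.1 (hι (Set.mem_univ x))
  obtain ⟨t, ⟨ht, hEt⟩, hx⟩ := Set.mem_iUnion₂.1 hx
  exact ⟨⟨i, hi⟩, t, ht, hx, hEt⟩

lemma exists_diam_smul_lt (T : Finset G) {δ : ℝ} (hδ : 0 < δ) :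
    ∃ η > 0, ∀ s ∈ T, ∀ A : Set X, Metric.diam A < η → Metric.diam (s • A) < δ := by
  have hT : UniformEquicontinuous fun s : T => fun x : X => (s : G) • x :=
    uniformEquicontinuous_finite.2 fun s =>
      CompactSpace.uniformContinuous_of_continuous (continuous_const_smul _)
  obtain ⟨η, hη, hη'⟩ := Metric.uniformEquicontinuous_iff.1 hT (δ / 2) (by positivity)
  refine ⟨η, hη, fun s hs A hA => ?_⟩
  refine (Metric.diam_le_of_forall_dist_le (by positivity) ?_).trans_lt (half_lt_self hδ)
  rintro _ ⟨a, ha, rfl⟩ _ ⟨b, hb, rfl⟩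
  exact (hη' a b ((Metric.dist_le_diam_of_mem Metric.isBounded_of_compactSpace ha hb).trans_lt
    hA) ⟨s, hs⟩).le

lemma FTowDimLE.covDimLE {f : ℕ} (h : FTowDimLE G X f) : CovDimLE X f := by
  classical
  intro U hUo hUcov
  obtain ⟨r, hr, hball⟩ := lebesgue_number_lemma_of_metric_sUnion (c := (U : Set (Set X)))
    isCompact_univ hUo (by rw [Set.sUnion_eq_biUnion]; simp [hUcov])
  obtain ⟨I, V, S, hVo, htow, hcov, -, hdiam, hchrom⟩ := h ∅ r hr
  obtain ⟨ι, hι⟩ := isCompact_univ.elim_finite_subcover (fun i => towerSpan G X (V i) (S i))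
    (fun i => isOpen_biUnion fun s _ => (hVo i).smul s) hcov.ge
  let levels := (ι.biUnion fun i => (S i).image fun s => s • V i).filter Set.Nonempty
  have mem_levels {v : Set X} :
      v ∈ levels ↔ (∃ i ∈ ι, ∃ s ∈ S i, s • V i = v) ∧ v.Nonempty := by
    simp [levels]
  refine ⟨levels, ?_, Set.eq_univ_of_forall fun x => ?_, ?_, fun x => ?_⟩
  · rintro _ (hv : _ ∈ levels)
    obtain ⟨⟨i, -, s, -, rfl⟩, -⟩ := mem_levels.1 hv
    exact (hVo i).smul s
  · obtain ⟨i, hi, hx⟩ := Set.mem_iUnion₂.1 (hι (Set.mem_univ x))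
    obtain ⟨s, hs, hxs⟩ := mem_towerSpan.1 hx
    exact Set.mem_iUnion₂.2 ⟨_, mem_levels.2 ⟨⟨i, hi, s, hs, rfl⟩, x, hxs⟩, hxs⟩
  · rintro _ (hv : _ ∈ levels)
    obtain ⟨⟨i, -, s, hs, rfl⟩, y, hy⟩ := mem_levels.1 hv
    obtain ⟨u, hu, hyu⟩ := hball y (Set.mem_univ y)
    exact ⟨u, hu, fun z hz => hyu <| Metric.mem_ball.2 <| (Metric.dist_le_diam_of_mem
      Metric.isBounded_of_compactSpace hz hy).trans_lt (hdiam i s hs)⟩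
  · have hsub : {v | v ∈ levels ∧ x ∈ v} ⊆
        (fun p : I × G => p.2 • V p.1) '' {p | p.2 ∈ S p.1 ∧ x ∈ p.2 • V p.1} := by
      rintro _ ⟨hv, hx⟩
      obtain ⟨⟨i, -, s, hs, rfl⟩, -⟩ := mem_levels.1 hv
      exact ⟨(i, s), ⟨hs, hx⟩, rfl⟩
    have hlevels := (Set.encard_le_encard hsub).trans <|
      (Set.encard_image_le _ _).trans (hchrom.encard_levels_le htow x)
    exact_mod_cast (Set.ncard_le_encard _).trans hlevels

lemma FTowDimLE.of_towDimLE_of_covDimLE {d c : ℕ} (hd : TowDimLE G X d) (hc : CovDimLE X c) :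
    FTowDimLE G X (d * c + d + c) := by
  classical
  intro E δ hδ
  obtain ⟨I, V, S, hVo, htow, -, hleb, hchrom⟩ := hd E
  obtain ⟨ι, hleb⟩ := hleb.exists_finset hVo
  obtain ⟨η, hη, hsmall⟩ := exists_diam_smul_lt (X := X) (ι.sup S) hδ
  obtain ⟨J, W, colW, hWo, hWcov, hWdiam, hWdisj⟩ := hc.exists_coloured_cover_diam_lt hη
  have hleb' := hleb.inter hWcov
  refine ⟨ι × J, fun p => V p.1 ∩ W p.2, fun p => S p.1, fun p => (hVo _).inter (hWo _),
    fun p => (htow _).mono Set.inter_subset_left, hleb'.towersCover, hleb', fun p s hs => ?_, ?_⟩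
  · exact hsmall s (Finset.mem_sup.2 ⟨p.1, p.1.2, hs⟩) _ <|
      (Metric.diam_mono Set.inter_subset_right Metric.isBounded_of_compactSpace).trans_lt
        (hWdiam p.2)
  · have hcard : (d + 1) * (c + 1) = d * c + d + c + 1 := by ring
    exact hcard ▸ (hchrom.comp Subtype.val_injective).inter (V := fun i : ι => V i)
      (fun i => htow i) colW hWdisj

end Dimensions

theorem towdim_ftowdim_covdim_general
    (G X : Type) [Group G]
    [MetricSpace X] [CompactSpace X]
    [MulAction G X] [ContinuousConstSMul G X] :
    towdim G X + 1 ≤ ftowdim G X + 1 ∧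
    ftowdim G X + 1 ≤ (towdim G X + 1) * (covdim X + 1) ∧
    (ftowdim G X < ⊤ ↔ towdim G X < ⊤ ∧ covdim X < ⊤) := by
  have htow : towdim G X ≤ ftowdim G X := dimOf_mono fun _ => FTowDimLE.towDimLE
  refine ⟨add_le_add_left htow 1,
    dimOf_add_one_le_mul fun _ _ => FTowDimLE.of_towDimLE_of_covDimLE, ?_⟩
  change dimOf _ < ⊤ ↔ dimOf _ < ⊤ ∧ dimOf _ < ⊤
  simp only [dimOf_lt_top_iff]
  exact ⟨fun ⟨f, hf⟩ => ⟨⟨f, hf.towDimLE⟩, ⟨f, hf.covDimLE⟩⟩,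
    fun ⟨⟨_, hd⟩, ⟨_, hc⟩⟩ => ⟨_, .of_towDimLE_of_covDimLE hd hc⟩⟩

/-- Proposition 4.10: `towdim⁺ ≤ ftowdim⁺ ≤ towdim⁺ · dim⁺`; in particular the
fine tower dimension is finite iff both the tower dimension and the covering dimension are. -/
theorem towdim_ftowdim_covdim
    (G X : Type) [Group G] [Countable G]
    [MetricSpace X] [CompactSpace X]
    [MulAction G X] [ContinuousConstSMul G X]
    (hfree : IsFreeAction G X) :
    towdim G X + 1 ≤ ftowdim G X + 1 ∧
    ftowdim G X + 1 ≤ (towdim G X + 1) * (covdim X + 1) ∧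
    (ftowdim G X < ⊤ ↔ towdim G X < ⊤ ∧ covdim X < ⊤) :=
  towdim_ftowdim_covdim_general G X

end Kerr
end

section
/- Let G be a countable discrete group acting freely and continuously on a compact metrizable space X. Then amdim(X,G) ≤ towdim(X,G). -/
open Pointwise MeasureTheory
open scoped ENNReal NNReal

/-!
Given `F` and `ε`, put `B = F ∪ F⁻¹ ∪ {1}` and take open towers `(Vᵢ, Sᵢ)` that are
`Bⁿ`-Lebesgue and `(d+1)`-colourable. The level `t` of tower `i` gets the weight
`wᵢ(t) = #{k < n | B^(k+1) t ⊆ Sᵢ} / n`: it vanishes off `Sᵢ`, equals `1` where the Lebesgue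
condition holds, and moves by at most `1/n` under `t ↦ s⁻¹ t` for `s ∈ B`. With bump functions
`hᵢ` supported in `Vᵢ`, the map `x ↦ ∑ᵢ ∑ₜ wᵢ(t) hᵢ(t⁻¹ x) δₜ` is continuous, has mass at least
one, and at any point meets at most `d + 1` towers in one level each. Hence its support has at
most `d + 1` elements and its translation defect is at most `(d + 1)/n`; normalizing at most
doubles the defect.
-/

namespace Kerr

open Function

section Depth

open Finset

variable {G : Type*} [Group G] [DecidableEq G]

def depthCount (B : Finset G) (n : ℕ) (S : Finset G) (t : G) : ℕ :=
  #{k ∈ range n | ∀ b ∈ B ^ (k + 1), b * t ∈ S}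

noncomputable def depthWeight (B : Finset G) (n : ℕ) (S : Finset G) (t : G) : ℝ :=
  depthCount B n S t / n

variable {B S : Finset G} {n : ℕ} {s t : G}

lemma depthCount_le_succ (hs : s⁻¹ ∈ B) :
    depthCount B n S t ≤ depthCount B n S (s⁻¹ * t) + 1 := by
  unfold depthCount
  calc #{k ∈ range n | ∀ b ∈ B ^ (k + 1), b * t ∈ S}
      ≤ #(insert 0 ({k ∈ range n | ∀ b ∈ B ^ (k + 1), b * (s⁻¹ * t) ∈ S}.image (· + 1))) := by
        refine card_le_card fun k hk => ?_
        obtain ⟨hkn, hk⟩ := mem_filter.1 hk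
        rcases k with _ | k
        · exact mem_insert_self _ _
        refine mem_insert_of_mem (mem_image.2 ⟨k, mem_filter.2 ⟨?_, fun b hb => ?_⟩, rfl⟩)
        · simp only [mem_range] at hkn ⊢; omega
        · rw [← mul_assoc]
          exact hk _ (by rw [pow_succ _ (k + 1)]; exact mul_mem_mul hb hs)
    _ ≤ _ := (card_insert_le _ _).trans (Nat.add_le_add_right card_image_le 1)

lemma depthWeight_nonneg : 0 ≤ depthWeight B n S t := by
  unfold depthWeight; positivity

lemma depthWeight_eq_zero_of_mul_notMem (hB : 1 ∈ B) {b : G} (hb : b ∈ B) (ht : b * t ∉ S) :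
    depthWeight B n S t = 0 := by
  suffices depthCount B n S t = 0 by simp [depthWeight, this]
  refine card_eq_zero.2 (filter_eq_empty_iff.2 fun k _ hk => ht (hk b ?_))
  exact subset_pow hB k.succ_ne_zero hb

lemma depthWeight_eq_one (hB : 1 ∈ B) (hn : n ≠ 0) (ht : ∀ e ∈ B ^ n, e * t ∈ S) :
    depthWeight B n S t = 1 := by
  have : depthCount B n S t = n := by
    refine (congrArg card (filter_true_of_mem fun k hk e he => ht e ?_)).trans (card_range n)
    exact pow_subset_pow_right hB (mem_range.1 hk) he
  simp [depthWeight, this, hn]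

lemma abs_depthWeight_sub_le (hs : s ∈ B) (hs' : s⁻¹ ∈ B) :
    |depthWeight B n S t - depthWeight B n S (s⁻¹ * t)| ≤ 1 / n := by
  have h₁ : (depthCount B n S t : ℝ) ≤ depthCount B n S (s⁻¹ * t) + 1 := by
    exact_mod_cast depthCount_le_succ hs'
  have h₂ : (depthCount B n S (s⁻¹ * t) : ℝ) ≤ depthCount B n S t + 1 := by
    have h := depthCount_le_succ (n := n) (S := S) (t := s⁻¹ * t) (s := s⁻¹) (by rwa [inv_inv])
    rw [inv_inv, mul_inv_cancel_left] at h
    exact_mod_cast h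
  unfold depthWeight
  rw [← sub_div, abs_div, Nat.abs_cast]
  exact div_le_div_of_nonneg_right (abs_sub_le_iff.2 ⟨by linarith, by linarith⟩) n.cast_nonneg

end Depth

section Normalization

lemma tsum_abs_div_tsum_sub_div_tsum_le {ι : Type*} {a b : ι → ℝ} (ha : Summable a)
    (hb : Summable b) (hb₀ : ∀ i, 0 ≤ b i) (hA : 0 < ∑' i, a i) (hB : 0 < ∑' i, b i) :
    ∑' i, |a i / ∑' j, a j - b i / ∑' j, b j| ≤ 2 * (∑' i, |a i - b i|) / ∑' i, a i := by
  set A := ∑' i, a i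
  set B := ∑' i, b i with hB_def
  have hab : Summable fun i => |a i - b i| := (ha.sub hb).abs
  have hdiff : |B - A| ≤ ∑' i, |a i - b i| := by
    rw [abs_sub_comm, ← ha.tsum_sub hb]
    simpa only [Real.norm_eq_abs] using norm_tsum_le_tsum_norm (f := fun i => a i - b i) hab
  have hpoint : ∀ i, |a i / A - b i / B| ≤ |a i - b i| / A + |B - A| / (A * B) * b i := by
    intro i
    have : a i / A - b i / B = (a i - b i) / A + (B - A) / (A * B) * b i := by
      field_simp; ring
    rw [this]
    refine (abs_add_le _ _).trans_eq ?_
    rw [abs_mul, abs_div, abs_div, abs_of_pos hA, abs_of_pos (mul_pos hA hB),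
      abs_of_nonneg (hb₀ i)]
  calc ∑' i, |a i / A - b i / B|
      ≤ ∑' i, (|a i - b i| / A + |B - A| / (A * B) * b i) :=
        Summable.tsum_le_tsum hpoint ((ha.div_const A).sub (hb.div_const B)).abs
          ((hab.div_const A).add (hb.mul_left _))
    _ = (∑' i, |a i - b i|) / A + |B - A| / A := by
        rw [(hab.div_const A).tsum_add (hb.mul_left _), tsum_div_const, tsum_mul_left, ← hB_def]
        field_simp
    _ ≤ 2 * (∑' i, |a i - b i|) / A := by
        rw [two_mul, add_div]
        gcongr

lemma exists_continuous_lp_coe_eq {X ι : Type*} [TopologicalSpace X] (p : ℝ≥0∞) [Fact (1 ≤ p)]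
    (T : Finset ι) (c : X → ι → ℝ) (hc : ∀ i, Continuous fun x => c x i)
    (hT : ∀ x, support (c x) ⊆ T) :
    ∃ φ : X → lp (fun _ : ι => ℝ) p, Continuous φ ∧ ∀ x, (φ x : ι → ℝ) = c x := by
  classical
  refine ⟨fun x => ∑ i ∈ T, c x i • lp.single p i 1,
    continuous_finsetSum _ fun i _ => (hc i).smul continuous_const, fun x => funext fun j => ?_⟩
  simp only [lp.coeFn_sum, Finset.sum_apply, lp.coeFn_smul, Pi.smul_apply, lp.single_apply,
    Pi.single_apply, smul_eq_mul, mul_ite, mul_one, mul_zero, Finset.sum_ite_eq]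
  split_ifs with hj
  · rfl
  · exact (notMem_support.1 fun h => hj (hT x h)).symm

variable {G X : Type*} [Group G] [TopologicalSpace X] [SMul G X]

lemma exists_lp_simplex_map (d : ℕ) (F : Finset G) (δ : ℝ) (T : Finset G) (c : X → G → ℝ)
    (hc : ∀ t, Continuous fun x => c x t) (hc₀ : ∀ x t, 0 ≤ c x t)
    (hT : ∀ x, support (c x) ⊆ T) (hcard : ∀ x, (support (c x)).ncard ≤ d + 1)
    (hmass : ∀ x, 1 ≤ ∑' t, c x t)
    (hF : ∀ s ∈ F, ∀ x, ∑' t, |c (s • x) t - c x (s⁻¹ * t)| ≤ δ) :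
    ∃ φ : X → lp (fun _ : G => ℝ) 1, Continuous φ ∧ (∀ x t, 0 ≤ (φ x : G → ℝ) t) ∧
      (∀ x, ∑' t, (φ x : G → ℝ) t = 1) ∧
      (∀ x, (support (φ x : G → ℝ)).Finite ∧ (support (φ x : G → ℝ)).ncard ≤ d + 1) ∧
      ∀ s ∈ F, ∀ x, ∑' t, |(φ (s • x) : G → ℝ) t - (φ x : G → ℝ) (s⁻¹ * t)| ≤ 2 * δ := by
  have hsum_eq : ∀ x, ∑' t, c x t = ∑ t ∈ T, c x t := fun x =>
    tsum_eq_sum fun t ht => notMem_support.1 fun h => ht (hT x h)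
  have hsummable : ∀ x, Summable (c x) := fun x =>
    summable_of_ne_finset_zero fun t ht => notMem_support.1 fun h => ht (hT x h)
  have hpos : ∀ x, 0 < ∑' t, c x t := fun x => one_pos.trans_le (hmass x)
  have hsupp : ∀ x, support (fun t => c x t / ∑' t, c x t) = support (c x) := fun x => by
    ext t; simp [(hpos x).ne']
  obtain ⟨φ, hφ, hφc⟩ := exists_continuous_lp_coe_eq 1 T (fun x t => c x t / ∑' t, c x t)
    (fun t => (hc t).div (by simpa only [hsum_eq] using continuous_finsetSum T fun t _ => hc t)
      fun x => (hpos x).ne')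
    (fun x => (hsupp x).trans_subset (hT x))
  refine ⟨φ, hφ, fun x t => ?_, fun x => ?_, fun x => ?_, fun s hs x => ?_⟩ <;> simp only [hφc]
  · exact div_nonneg (hc₀ x t) (hpos x).le
  · rw [tsum_div_const, div_self (hpos x).ne']
  · rw [hsupp]
    exact ⟨T.finite_toSet.subset (hT x), hcard x⟩
  · have hshift : ∑' t, c x (s⁻¹ * t) = ∑' t, c x t := (Equiv.mulLeft s⁻¹).tsum_eq (c x)
    rw [← hshift]
    calc _ ≤ 2 * (∑' t, |c (s • x) t - c x (s⁻¹ * t)|) / ∑' t, c (s • x) t :=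
          tsum_abs_div_tsum_sub_div_tsum_le (hsummable _)
            ((Equiv.mulLeft s⁻¹).summable_iff.2 (hsummable x)) (fun t => hc₀ x _) (hpos _)
            (hshift ▸ hpos x)
      _ ≤ 2 * δ := (div_le_self (by positivity) (hmass _)).trans (by gcongr; exact hF s hs x)

end Normalization

section Towers

open Set

variable {G X : Type} [Group G] [MulAction G X] {I : Type}
  {V : I → Set X} {S : I → Finset G}

lemma card_le_of_forall_mem_levels {d : ℕ} (htower : ∀ i, IsTower G X (V i) (S i))
    (hchrom : ChromaticLE G X V S d) {y : X} (P : Finset (I × G))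
    (hP : ∀ p ∈ P, p.2 ∈ S p.1 ∧ y ∈ p.2 • V p.1) : P.card ≤ d := by
  obtain ⟨col, hcol⟩ := hchrom
  refine (Finset.card_le_card_of_injOn (fun p => col p.1) (fun _ _ => Finset.mem_coe.2
    (Finset.mem_univ _)) ?_).trans (Finset.card_fin d).le
  rintro ⟨i, t⟩ hp ⟨j, u⟩ hq (hij : col i = col j)
  obtain ⟨ht, hyt⟩ := hP _ hp
  obtain ⟨hu, hyu⟩ := hP _ hq
  by_cases hij' : i = j
  · subst hij'
    by_contra htu
    exact disjoint_left.1 (htower i t ht u hu fun h => htu (h ▸ rfl)) hyt hyu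
  · exact (disjoint_left.1 (hcol i j hij' hij) (mem_iUnion₂.2 ⟨t, ht, hyt⟩)
      (mem_iUnion₂.2 ⟨u, hu, hyu⟩)).elim

lemma IsLebesgueTowers.exists_bump_functions [TopologicalSpace X] [CompactSpace X] [T2Space X]
    [ContinuousConstSMul G X] {E : Finset G} (hV : ∀ i, IsOpen (V i))
    (hleb : IsLebesgueTowers G X E V S) :
    ∃ (J : Finset I) (h : I → X → ℝ), (∀ i, Continuous (h i)) ∧ (∀ i y, h i y ∈ Icc 0 1) ∧
      (∀ i y, h i y ≠ 0 → y ∈ V i) ∧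
      ∀ x, ∃ i ∈ J, ∃ t, (∀ e ∈ E, e * t ∈ S i) ∧ h i (t⁻¹ • x) = 1 := by
  classical
  choose i t _ hx hdeep using hleb
  have hU : ∀ x, IsOpen (t x • V (i x)) := fun x => (hV _).smul _
  choose K hKx hKc hKU using fun x => exists_mem_nhds_isClosed_subset ((hU x).mem_nhds (hx x))
  obtain ⟨Z, -, hZ⟩ := isCompact_univ.elim_nhds_subcover K fun x _ => hKx x
  choose f hf₀ hf₁ hf using fun z => exists_continuous_zero_one_of_isClosed (hU z).isClosed_compl
    (hKc z) (disjoint_compl_left.mono_right (hKU z))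
  refine ⟨Z.image i, fun j y => min 1 (∑ z ∈ Z with i z = j, f z (t z • y)),
    fun j => continuous_const.min (continuous_finsetSum _ fun z _ =>
      (f z).continuous.comp (continuous_const_smul _)),
    fun j y => ⟨le_min zero_le_one (Finset.sum_nonneg fun z _ => (hf z _).1), min_le_left _ _⟩,
    fun j y hy => ?_, fun x => ?_⟩
  · have hsum : ∑ z ∈ Z with i z = j, f z (t z • y) ≠ 0 := fun h0 =>
      hy (show min 1 _ = 0 by rw [h0, min_eq_right zero_le_one])
    obtain ⟨z, hz, hfz⟩ := Finset.exists_ne_zero_of_sum_ne_zero hsum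
    have hzj : i z = j := (Finset.mem_filter.1 hz).2
    by_contra hyV
    exact hfz (hf₀ z fun h => hyV (hzj ▸ (smul_mem_smul_set_iff.1 h)))
  · obtain ⟨z, hz, hxz⟩ := mem_iUnion₂.1 (hZ (mem_univ x))
    refine ⟨i z, Finset.mem_image_of_mem i hz, t z, hdeep z, min_eq_left ?_⟩
    calc (1 : ℝ) = f z (t z • (t z)⁻¹ • x) := by rw [smul_inv_smul, hf₁ z hxz, Pi.one_apply]
      _ ≤ _ := Finset.single_le_sum (f := fun z' => f z' (t z' • (t z)⁻¹ • x))
          (fun z' _ => (hf z' _).1) (Finset.mem_filter.2 ⟨hz, rfl⟩ : z ∈ {z' ∈ Z | i z' = i z})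

end Towers

section TowerCoeff

open Set

variable {G X : Type} [Group G] [DecidableEq G] [MulAction G X] {I : Type}

noncomputable def towerCoeff (B : Finset G) (n : ℕ) (J : Finset I) (S : I → Finset G)
    (h : I → X → ℝ) (x : X) (t : G) : ℝ :=
  ∑ i ∈ J, depthWeight B n (S i) t * h i (t⁻¹ • x)

variable {B : Finset G} {n : ℕ} {J : Finset I} {V : I → Set X} {S : I → Finset G}
  {h : I → X → ℝ}

lemma continuous_towerCoeff [TopologicalSpace X] [ContinuousConstSMul G X]
    (hh : ∀ i, Continuous (h i)) (t : G) : Continuous fun x => towerCoeff B n J S h x t :=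
  continuous_finsetSum _ fun i _ => continuous_const.mul ((hh i).comp (continuous_const_smul _))

lemma towerCoeff_nonneg (hh : ∀ i y, h i y ∈ Icc 0 1) (x : X) (t : G) :
    0 ≤ towerCoeff B n J S h x t :=
  Finset.sum_nonneg fun i _ => mul_nonneg depthWeight_nonneg (hh i _).1

lemma mem_level_of_depthWeight_mul_ne_zero (hB : 1 ∈ B) (hV : ∀ i y, h i y ≠ 0 → y ∈ V i)
    {i : I} {x : X} {t : G} (hne : depthWeight B n (S i) t * h i (t⁻¹ • x) ≠ 0) :
    t ∈ S i ∧ x ∈ t • V i := by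
  refine ⟨?_, mem_smul_set_iff_inv_smul_mem.2 (hV i _ (right_ne_zero_of_mul hne))⟩
  by_contra ht
  exact left_ne_zero_of_mul hne (depthWeight_eq_zero_of_mul_notMem hB hB (by rwa [one_mul]))

lemma support_towerCoeff_subset (hB : 1 ∈ B) (x : X) :
    support (towerCoeff B n J S h x) ⊆ J.biUnion S := by
  intro t ht
  obtain ⟨i, hi, hne⟩ := Finset.exists_ne_zero_of_sum_ne_zero ht
  by_contra hT
  refine left_ne_zero_of_mul hne (depthWeight_eq_zero_of_mul_notMem hB hB ?_)
  rw [one_mul]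
  exact fun hS => hT (Finset.mem_biUnion.2 ⟨i, hi, hS⟩)

lemma ncard_support_towerCoeff_le {d : ℕ} (hB : 1 ∈ B) (hV : ∀ i y, h i y ≠ 0 → y ∈ V i)
    (htower : ∀ i, IsTower G X (V i) (S i)) (hchrom : ChromaticLE G X V S (d + 1)) (x : X) :
    (support (towerCoeff B n J S h x)).ncard ≤ d + 1 := by
  classical
  set P := (J ×ˢ J.biUnion S).filter fun p => p.2 ∈ S p.1 ∧ x ∈ p.2 • V p.1
  have hsub : support (towerCoeff B n J S h x) ⊆ P.image Prod.snd := by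
    intro t ht
    obtain ⟨i, hi, hne⟩ := Finset.exists_ne_zero_of_sum_ne_zero ht
    obtain ⟨hS, hx⟩ := mem_level_of_depthWeight_mul_ne_zero hB hV hne
    exact Finset.mem_image.2 ⟨(i, t), Finset.mem_filter.2
      ⟨Finset.mem_product.2 ⟨hi, Finset.mem_biUnion.2 ⟨i, hi, hS⟩⟩, hS, hx⟩, rfl⟩
  calc (support (towerCoeff B n J S h x)).ncard ≤ (P.image Prod.snd : Set G).ncard :=
        ncard_le_ncard hsub (Finset.finite_toSet _)
    _ ≤ P.card := (ncard_coe_finset _).trans_le Finset.card_image_le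
    _ ≤ d + 1 :=
        card_le_of_forall_mem_levels htower hchrom P fun p hp => (Finset.mem_filter.1 hp).2

lemma one_le_tsum_towerCoeff (hB : 1 ∈ B) (hn : n ≠ 0) (hh : ∀ i y, h i y ∈ Icc 0 1) {x : X}
    (hx : ∃ i ∈ J, ∃ t, (∀ e ∈ B ^ n, e * t ∈ S i) ∧ h i (t⁻¹ • x) = 1) :
    1 ≤ ∑' t, towerCoeff B n J S h x t := by
  obtain ⟨i, hi, t, hdeep, hone⟩ := hx
  have hsummable : Summable (towerCoeff B n J S h x) := summable_of_ne_finset_zero fun t ht =>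
    notMem_support.1 fun h' => ht (support_towerCoeff_subset hB x h')
  calc (1 : ℝ) = depthWeight B n (S i) t * h i (t⁻¹ • x) := by
        rw [depthWeight_eq_one hB hn hdeep, hone, one_mul]
    _ ≤ towerCoeff B n J S h x t := Finset.single_le_sum
        (f := fun i => depthWeight B n (S i) t * h i (t⁻¹ • x))
        (fun i _ => mul_nonneg depthWeight_nonneg (hh i _).1) hi
    _ ≤ ∑' t, towerCoeff B n J S h x t :=
        hsummable.le_tsum t fun u _ => towerCoeff_nonneg hh x u

open Classical in
lemma abs_towerCoeff_smul_sub_le (hB : 1 ∈ B) (hh : ∀ i y, h i y ∈ Icc 0 1)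
    (hV : ∀ i y, h i y ≠ 0 → y ∈ V i) {s : G} (hs : s ∈ B) (hs' : s⁻¹ ∈ B) (x : X) (t : G) :
    |towerCoeff B n J S h (s • x) t - towerCoeff B n J S h x (s⁻¹ * t)| ≤
      ∑ i ∈ J, if t ∈ S i ∧ s • x ∈ t • V i then (1 / n : ℝ) else 0 := by
  have harg : (s⁻¹ * t)⁻¹ • x = t⁻¹ • s • x := by rw [mul_inv_rev, inv_inv, mul_smul]
  unfold towerCoeff
  rw [← Finset.sum_sub_distrib]
  refine (Finset.abs_sum_le_sum_abs _ _).trans (Finset.sum_le_sum fun i _ => ?_)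
  rw [harg, ← sub_mul, abs_mul, abs_of_nonneg (hh i _).1]
  split_ifs with hlev
  · exact (mul_le_of_le_one_right (abs_nonneg _) (hh i _).2).trans
      (abs_depthWeight_sub_le hs hs')
  by_cases hzero : h i (t⁻¹ • s • x) = 0
  · rw [hzero, mul_zero]
  have ht : t ∉ S i := fun ht => hlev ⟨ht, mem_smul_set_iff_inv_smul_mem.2 (hV i _ hzero)⟩
  rw [depthWeight_eq_zero_of_mul_notMem hB hB (by rwa [one_mul]),
    depthWeight_eq_zero_of_mul_notMem hB hs (by rwa [mul_inv_cancel_left]), sub_zero, abs_zero,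
    zero_mul]

lemma tsum_abs_towerCoeff_smul_sub_le {d : ℕ} (hB : 1 ∈ B) (hh : ∀ i y, h i y ∈ Icc 0 1)
    (hV : ∀ i y, h i y ≠ 0 → y ∈ V i) (htower : ∀ i, IsTower G X (V i) (S i))
    (hchrom : ChromaticLE G X V S (d + 1)) {s : G} (hs : s ∈ B) (hs' : s⁻¹ ∈ B) (x : X) :
    ∑' t, |towerCoeff B n J S h (s • x) t - towerCoeff B n J S h x (s⁻¹ * t)| ≤ (d + 1) / n := by
  classical
  have hbound := abs_towerCoeff_smul_sub_le (n := n) (J := J) (S := S) hB hh hV hs hs' x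
  have hvanish : ∀ t ∉ J.biUnion S,
      |towerCoeff B n J S h (s • x) t - towerCoeff B n J S h x (s⁻¹ * t)| = 0 := fun t ht =>
    le_antisymm ((hbound t).trans_eq (Finset.sum_eq_zero fun i hi =>
      if_neg fun hl => ht (Finset.mem_biUnion.2 ⟨i, hi, hl.1⟩))) (abs_nonneg _)
  rw [tsum_eq_sum hvanish]
  set P := (J ×ˢ J.biUnion S).filter fun p => p.2 ∈ S p.1 ∧ s • x ∈ p.2 • V p.1
  calc _ ≤ ∑ t ∈ J.biUnion S, ∑ i ∈ J, if t ∈ S i ∧ s • x ∈ t • V i then (1 / n : ℝ) else 0 :=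
        Finset.sum_le_sum fun t _ => hbound t
    _ = P.card * (1 / n) := by
        rw [← Finset.sum_product_right (f := fun p : I × G =>
          if p.2 ∈ S p.1 ∧ s • x ∈ p.2 • V p.1 then (1 / n : ℝ) else 0), ← Finset.sum_filter,
          Finset.sum_const, nsmul_eq_mul]
    _ ≤ (d + 1) * (1 / n) := by
        gcongr
        exact_mod_cast card_le_of_forall_mem_levels htower hchrom P fun p hp =>
          (Finset.mem_filter.1 hp).2
    _ = (d + 1) / n := mul_one_div _ _

end TowerCoeff

theorem TowDimLE.amDimLE {G X : Type} [Group G] [TopologicalSpace X] [CompactSpace X]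
    [T2Space X] [MulAction G X] [ContinuousConstSMul G X] {d : ℕ} (hd : TowDimLE G X d) :
    AmDimLE G X d := by
  classical
  intro F ε hε
  obtain ⟨n, hn⟩ := exists_nat_gt (2 * (d + 1) / ε)
  have hn₀ : (0 : ℝ) < n := (by positivity : (0 : ℝ) < 2 * (d + 1) / ε).trans hn
  set B := F ∪ F⁻¹ ∪ {1}
  have hB : 1 ∈ B := by simp [B]
  have hFB : ∀ s ∈ F, s ∈ B ∧ s⁻¹ ∈ B := fun s hs => by simp [B, hs]
  obtain ⟨I, V, S, hV, htower, -, hleb, hchrom⟩ := hd (B ^ n)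
  obtain ⟨J, h, hh, hh₁, hhV, hcover⟩ := hleb.exists_bump_functions hV
  obtain ⟨φ, hφ, hφ₀, hφ₁, hφd, hφF⟩ := exists_lp_simplex_map d F ((d + 1) / n) (J.biUnion S)
    (towerCoeff B n J S h) (continuous_towerCoeff hh) (towerCoeff_nonneg hh₁)
    (support_towerCoeff_subset hB) (ncard_support_towerCoeff_le hB hhV htower hchrom)
    (fun x => one_le_tsum_towerCoeff hB (by exact_mod_cast hn₀.ne') hh₁ (hcover x))
    (fun s hs => tsum_abs_towerCoeff_smul_sub_le hB hh₁ hhV htower hchrom (hFB s hs).1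
      (hFB s hs).2)
  refine ⟨φ, hφ, hφ₀, hφ₁, hφd, fun s hs x => (hφF s hs x).trans_lt ?_⟩
  rw [mul_div_assoc', div_lt_iff₀ hn₀]
  rw [div_lt_iff₀ hε] at hn
  linarith

theorem amdim_le_towdim_general
    (G X : Type) [Group G]
    [TopologicalSpace X] [CompactSpace X] [TopologicalSpace.MetrizableSpace X]
    [MulAction G X] [ContinuousConstSMul G X] :
    amdim G X ≤ towdim G X :=
  sInf_le_sInf fun _ ⟨d, hm, hd⟩ => ⟨d, hm, hd.amDimLE⟩

/-- Theorem 5.2: the amenability dimension is at most the tower dimension. -/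
theorem amdim_le_towdim
    (G X : Type) [Group G] [Countable G]
    [TopologicalSpace X] [CompactSpace X] [TopologicalSpace.MetrizableSpace X]
    [MulAction G X] [ContinuousConstSMul G X]
    (hfree : IsFreeAction G X) :
    amdim G X ≤ towdim G X :=
  amdim_le_towdim_general G X

end Kerr
end

section
/- A free continuous action G ↷ X of a countable discrete group on a zero-dimensional compact metric space is almost finite if and only if for every finite set K ⊆ G and δ > 0 there is a clopen castle whose shapes are (K,δ)-invariant and whose levels partition X. -/
open Pointwise MeasureTheory
open scoped ENNReal NNReal

/-!
Clopen castle ⇒ almost finite: cutting the bases of a clopen castle that partitions `X` along a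
clopen partition fine enough that every level has small diameter gives an open castle with
empty remainder, so `S' = ∅` works.

Almost finite ⇒ clopen castle: take an almost finite castle for `n ≥ 4 / δ` and `δ / 2`. Using
zero-dimensionality, the open bases are replaced by clopen ones and the subequivalence of the
remainder by a locally constant translation `x ↦ γ x • x` moving the (now clopen) remainder
injectively into the levels indexed by `S'`. Every remainder point is then appended as a new
level to the tower whose `S'`-level it is sent to: splitting each base according to which of
its `S'`-levels receive remainder points enlarges each shape `S` by at most
`|S'| < |S| / n ≤ δ |S| / 4` elements, which keeps it `(K, δ)`-invariant.
-/

open Set Function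

section Topology

variable {X : Type} [TopologicalSpace X]

theorem IsClopen.isLocallyConstant_mem {B : Set X} (hB : IsClopen B) :
    IsLocallyConstant (· ∈ B) := by
  refine (IsLocallyConstant.iff_eventually_eq _).2 fun x => ?_
  by_cases hx : x ∈ B
  · filter_upwards [hB.isOpen.mem_nhds hx] with y hy
    simp [hx, hy]
  · filter_upwards [hB.compl.isOpen.mem_nhds hx] with y hy
    simp_all

theorem IsLocallyConstant.finset_filter {α : Type} (s : Finset α) {p : α → X → Prop}
    [∀ a x, Decidable (p a x)] (hp : ∀ a ∈ s, IsLocallyConstant (p a)) :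
    IsLocallyConstant fun x => s.filter (p · x) := by
  refine (IsLocallyConstant.iff_eventually_eq _).2 fun x => ?_
  filter_upwards [(Filter.eventually_all_finset s).2 fun a ha => (hp a ha).eventually_eq x]
    with y hy
  exact Finset.filter_congr fun a ha => by rw [hy a ha]

theorem IsClopen.inter_of_subset_iUnion {ι : Type} {E : Set X} {O : ι → Set X}
    (hE : IsClopen E) (hO : ∀ i, IsOpen (O i)) (hd : Pairwise (Disjoint on O))
    (hEO : E ⊆ ⋃ i, O i) (i : ι) : IsClopen (E ∩ O i) := by
  refine ⟨?_, hE.isOpen.inter (hO i)⟩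
  have : E ∩ O i = E \ ⋃ (j) (_ : j ≠ i), O j := by
    ext x
    simp only [mem_inter_iff, mem_sdiff, mem_iUnion, not_exists]
    refine ⟨fun ⟨hxE, hxi⟩ => ⟨hxE, fun j hji hxj => (hd hji).le_bot ⟨hxj, hxi⟩⟩,
      fun ⟨hxE, hx⟩ => ⟨hxE, ?_⟩⟩
    obtain ⟨j, hxj⟩ := mem_iUnion.1 (hEO hxE)
    by_cases hji : j = i
    · exact hji ▸ hxj
    · exact (hx j hji hxj).elim
  rw [this]
  exact hE.isClosed.sdiff (isOpen_iUnion fun j => isOpen_iUnion fun _ => hO j)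

theorem IsClopen.smul {G : Type} [Group G] [MulAction G X] [ContinuousConstSMul G X] {A : Set X}
    (hA : IsClopen A) (g : G) : IsClopen (g • A) :=
  ⟨hA.isClosed.smul g, hA.isOpen.smul g⟩

end Topology

namespace Kerr

theorem exists_isLocallyConstant_mem_cover {X : Type} [TopologicalSpace X] [CompactSpace X]
    (hzd : ZeroDimensional X) {ι : Type} {U : ι → Set X} (hU : ∀ i, IsOpen (U i))
    (hcov : ∀ x, ∃ i, x ∈ U i) :
    ∃ c : X → ι, IsLocallyConstant c ∧ ∀ x, x ∈ U (c x) := by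
  classical
  rcases isEmpty_or_nonempty X with _ | _
  · exact ⟨isEmptyElim, .of_constant _ fun x => isEmptyElim x, fun x => isEmptyElim x⟩
  choose i hi using hcov
  choose E hE hxE hEU using fun x => hzd x (U (i x)) (hU _) (hi x)
  obtain ⟨t, ht⟩ := isCompact_univ.elim_finite_subcover E (fun x => (hE x).isOpen)
    fun x _ => mem_iUnion.2 ⟨x, hxE x⟩
  -- the member chosen for `x` depends on `x` only through the locally constant `F x`
  let F : X → Finset X := fun x => t.filter (x ∈ E ·)
  have hF : IsLocallyConstant F :=
    .finset_filter t fun y _ => (hE y).isLocallyConstant_mem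
  refine ⟨fun x => i (Classical.epsilon (· ∈ F x)), hF.comp fun s => i (Classical.epsilon (· ∈ s)),
    fun x => hEU _ ?_⟩
  obtain ⟨y, hy, hxy⟩ := mem_iUnion₂.1 (ht (mem_univ x))
  exact (Finset.mem_filter.1 (Classical.epsilon_spec (p := (· ∈ F x)) ⟨y, by simp [F, hy, hxy]⟩)).2

section Castle

variable {G X : Type} [Group G] [MulAction G X]

theorem isCastle_iff {I : Type} {V : I → Set X} {S : I → Finset G} :
    IsCastle G X V S ↔ ∀ i j, ∀ s ∈ S i, ∀ t ∈ S j, ∀ x ∈ V i, ∀ y ∈ V j,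
      s • x = t • y → i = j ∧ s = t := by
  constructor
  · rintro ⟨htower, hdisj⟩ i j s hs t ht x hx y hy hxy
    by_cases hij : i = j
    · subst hij
      refine ⟨rfl, by_contra fun hst => ?_⟩
      exact disjoint_left.1 (htower i s hs t ht hst) (smul_mem_smul_set hx)
        (hxy ▸ smul_mem_smul_set hy)
    · exact (disjoint_left.1 (hdisj i j hij) (mem_biUnion hs (smul_mem_smul_set hx))
        (hxy ▸ mem_biUnion ht (smul_mem_smul_set hy))).elim
  · intro h
    refine ⟨fun i s hs t ht hst => disjoint_left.2 ?_, fun i j hij => disjoint_left.2 ?_⟩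
    · rintro _ ⟨x, hx, rfl⟩ ⟨y, hy, hyx⟩
      exact hst (h i i s hs t ht x hx y hy hyx.symm).2
    · intro z hzi hzj
      obtain ⟨s, hs, x, hx, rfl⟩ := mem_iUnion₂.1 hzi
      obtain ⟨t, ht, y, hy, hyx⟩ := mem_iUnion₂.1 hzj
      exact hij (h i j s hs t ht x hx y hy hyx.symm).1

theorem towerSpan_mono {V V' : Set X} (h : V ⊆ V') (S : Finset G) :
    towerSpan G X V S ⊆ towerSpan G X V' S :=
  iUnion₂_mono fun _ _ => smul_set_mono h

theorem IsCastle.mono {I : Type} {V V' : I → Set X} {S : I → Finset G} (hc : IsCastle G X V S)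
    (h : ∀ i, V' i ⊆ V i) : IsCastle G X V' S := by
  rw [isCastle_iff] at hc ⊢
  exact fun i j s hs t ht x hx y hy => hc i j s hs t ht x (h i hx) y (h j hy)

theorem subEquivM_empty [TopologicalSpace X] (m : ℕ) (B : Set X) : SubEquivM G X m ∅ B :=
  fun C _ hC => ⟨∅, fun _ => 1, fun _ => 0, by simp, by simpa using hC, by simp, by simp⟩

theorem card_filter_le_of_injOn {A : Set X} {γ : X → G} (hinj : InjOn (fun x => γ x • x) A)
    [DecidablePred (· ∈ A)] [DecidableEq G] (C S' : Finset G) (y : X) :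
    (C.filter fun h => h • y ∈ A ∧ γ (h • y) * h ∈ S').card ≤ S'.card := by
  refine Finset.card_le_card_of_injOn (fun h => γ (h • y) * h)
    (fun h hh => (Finset.mem_filter.1 hh).2.2) fun h hh h' hh' hhh' => ?_
  have hx : h • y = h' • y := hinj (Finset.mem_filter.1 hh).2.1 (Finset.mem_filter.1 hh').2.1 <| by
    simp only [← mul_smul]
    exact congrArg (· • y) hhh'
  simp only [hx] at hhh'
  exact mul_left_cancel hhh'

theorem exists_clopen_castle_of_isLocallyConstant [TopologicalSpace X] [CompactSpace X]
    {J α : Type} [Finite J] {V : J → Set X} (hV : ∀ j, IsClopen (V j)) {ℓ : J → X → α}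
    (hℓ : ∀ j, IsLocallyConstant (ℓ j)) (T : J → α → Finset G)
    (hT : ∀ j j' y y' g g', y ∈ V j → y' ∈ V j' → g ∈ T j (ℓ j y) → g' ∈ T j' (ℓ j' y') →
      g • y = g' • y' → j = j' ∧ g = g') :
    ∃ (I : Type) (_ : Fintype I) (W : I → Set X) (S : I → Finset G),
      (∀ i, IsClopen (W i)) ∧ IsCastle G X W S ∧
      (∀ i, ∃ j y, W i ⊆ ℓ j ⁻¹' {ℓ j y} ∧ S i = T j (ℓ j y)) ∧
      ∀ j, ∀ y ∈ V j, ∀ g ∈ T j (ℓ j y), g • y ∈ ⋃ i, towerSpan G X (W i) (S i) := by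
  have (j : J) : Finite (range (ℓ j)) := (hℓ j).range_finite.to_subtype
  refine ⟨Σ j, range (ℓ j), Fintype.ofFinite _, fun p => V p.1 ∩ ℓ p.1 ⁻¹' {p.2.1},
    fun p => T p.1 p.2.1, fun p => (hV p.1).inter ((hℓ p.1).isClopen_fiber p.2.1), ?_,
    ?_, ?_⟩
  · rw [isCastle_iff]
    rintro ⟨j, a, ha⟩ ⟨j', a', ha'⟩ g hg g' hg' y ⟨hy, hya⟩ y' ⟨hy', hya'⟩ hyy'
    dsimp only at hg hg' hy hy' hya hya'
    rw [mem_preimage, mem_singleton_iff] at hya hya'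
    subst hya hya'
    obtain ⟨rfl, rfl⟩ := hT j j' y y' g g' hy hy' hg hg' hyy'
    obtain rfl := smul_left_cancel g hyy'
    exact ⟨rfl, rfl⟩
  · rintro ⟨j, _, y, rfl⟩
    exact ⟨j, y, inter_subset_right, rfl⟩
  · intro j y hy g hg
    exact mem_iUnion.2 ⟨⟨j, ℓ j y, y, rfl⟩, mem_biUnion hg (smul_mem_smul_set ⟨hy, rfl⟩)⟩

end Castle

section Folner

variable {G : Type} [Group G] [DecidableEq G]

theorem FolnerInv.union {K S : Finset G} {δ : ℝ} (hS : FolnerInv G K (δ / 2) S) {R : Finset G}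
    (hR : (R.card : ℝ) ≤ δ / 4 * S.card) : FolnerInv G K δ (S ∪ R) := by
  refine ⟨hS.1.mono Finset.subset_union_left, fun s hs => ?_⟩
  have hsub : symmDiff (s • (S ∪ R)) (S ∪ R) ⊆ symmDiff (s • S) S ∪ (s • R ∪ R) := by
    intro x
    simp only [Finset.smul_finset_union, Finset.mem_symmDiff, Finset.mem_union]
    tauto
  have hcard : (symmDiff (s • (S ∪ R)) (S ∪ R)).card ≤ (symmDiff (s • S) S).card + 2 * R.card :=
    calc _ ≤ (symmDiff (s • S) S ∪ (s • R ∪ R)).card := Finset.card_le_card hsub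
      _ ≤ (symmDiff (s • S) S).card + ((s • R).card + R.card) :=
        (Finset.card_union_le _ _).trans (Nat.add_le_add_left (Finset.card_union_le _ _) _)
      _ = _ := by rw [Finset.card_smul_finset]; ring
  have hSpos : (0 : ℝ) < S.card := by exact_mod_cast hS.1.card_pos
  have hδ : 0 ≤ δ := by nlinarith [(R.card.cast_nonneg : (0 : ℝ) ≤ R.card)]
  have hSR : (S.card : ℝ) ≤ (S ∪ R).card := by
    exact_mod_cast Finset.card_le_card Finset.subset_union_left
  calc ((symmDiff (s • (S ∪ R)) (S ∪ R)).card : ℝ)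
      ≤ (symmDiff (s • S) S).card + 2 * R.card := by exact_mod_cast hcard
    _ < δ / 2 * S.card + 2 * (δ / 4 * S.card) := by linarith [hS.2 s hs]
    _ = δ * S.card := by ring
    _ ≤ δ * (S ∪ R).card := mul_le_mul_of_nonneg_left hSR hδ

end Folner

section ClopenCastle

variable {G X : Type} [Group G] [TopologicalSpace X] [MulAction G X] [ContinuousConstSMul G X]

theorem isClopen_iUnion_towerSpan {J : Type} [Finite J] {V : J → Set X} (hV : ∀ j, IsClopen (V j))
    (S : J → Finset G) : IsClopen (⋃ j, towerSpan G X (V j) (S j)) :=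
  isClopen_iUnion_of_finite fun j => isClopen_biUnion_finset fun s _ => (hV j).smul s

theorem SubEquivM.exists_translation [CompactSpace X] (hzd : ZeroDimensional X) {A B : Set X}
    (hA : IsClosed A) (h : SubEquivM G X 0 A B) :
    ∃ O : Set X, IsOpen O ∧ A ⊆ O ∧ ∀ C : Set X, IsClopen C → C ⊆ O →
      ∃ (γ : X → G) (Z : Set X), IsLocallyConstant γ ∧ IsClopen Z ∧ Z ⊆ B ∧
        InjOn (fun x => γ x • x) C ∧ MapsTo (fun x => γ x • x) C Z := by
  obtain ⟨𝒰, σ, col, h𝒰, hA𝒰, hσ𝒰, hdisj⟩ := h A hA subset_rfl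
  refine ⟨⋃ u ∈ 𝒰, u, isOpen_biUnion h𝒰, hA𝒰, fun C hC hCO => ?_⟩
  let U : Option 𝒰 → Set X := fun o => o.elim Cᶜ (↑)
  obtain ⟨c, hc, hcU⟩ := exists_isLocallyConstant_mem_cover hzd (U := U)
    (by rintro (_ | u); exacts [hC.compl.isOpen, h𝒰 u u.2]) fun x => by
      by_cases hx : x ∈ C
      · obtain ⟨u, hu, hxu⟩ := mem_iUnion₂.1 (hCO hx)
        exact ⟨some ⟨u, hu⟩, hxu⟩
      · exact ⟨none, hx⟩
  have hsome : ∀ x ∈ C, ∃ u : 𝒰, c x = some u ∧ x ∈ (u : Set X) := by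
    intro x hx
    have hxU := hcU x
    rcases hcx : c x with _ | u
    · exact absurd hx (by simpa [U, hcx] using hxU)
    · exact ⟨u, rfl, by simpa [U, hcx] using hxU⟩
  let γ : X → G := (fun o : Option 𝒰 => o.elim 1 fun u => σ u) ∘ c
  refine ⟨γ, ⋃ u : 𝒰, σ u • (C ∩ c ⁻¹' {some u}), hc.comp _,
    isClopen_iUnion_of_finite fun u => (hC.inter (hc.isClopen_fiber _)).smul _,
    iUnion_subset fun u => ?_, ?_, fun x hx => ?_⟩
  · refine (smul_set_mono fun x hx => ?_).trans (hσ𝒰 u u.2)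
    obtain ⟨u', hu', hxu'⟩ := hsome x hx.1
    rwa [Option.some_injective _ (hu'.symm.trans hx.2)] at hxu'
  · intro x hx x' hx' hxx'
    obtain ⟨u, hu, hxu⟩ := hsome x hx
    obtain ⟨u', hu', hxu'⟩ := hsome x' hx'
    simp only [γ, Function.comp_apply, hu, hu', Option.elim_some] at hxx'
    by_cases huu' : u = u'
    · subst huu'
      exact smul_left_cancel _ hxx'
    · have hdisj' := hdisj u u.2 u' u'.2 (Subtype.coe_injective.ne huu')
        (Subsingleton.elim (α := Fin 1) _ _)
      exact (disjoint_left.1 hdisj' (smul_mem_smul_set hxu) (hxx' ▸ smul_mem_smul_set hxu')).elim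
  · obtain ⟨u, hu, -⟩ := hsome x hx
    refine mem_iUnion.2 ⟨u, ?_⟩
    simp only [γ, Function.comp_apply, hu, Option.elim_some]
    exact smul_mem_smul_set ⟨hx, hu⟩

theorem exists_clopen_bases_compl_subset [CompactSpace X] (hzd : ZeroDimensional X) {J : Type}
    {V : J → Set X} {S : J → Finset G} (hV : ∀ j, IsOpen (V j)) {O : Set X} (hO : IsOpen O)
    (hVO : (⋃ j, towerSpan G X (V j) (S j))ᶜ ⊆ O) :
    ∃ D : J → Set X, (∀ j, IsClopen (D j)) ∧ (∀ j, D j ⊆ V j) ∧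
      (⋃ j, towerSpan G X (D j) (S j))ᶜ ⊆ O := by
  let U : Option (Σ j, S j) → Set X := fun o => o.elim O fun p => (p.2 : G) • V p.1
  obtain ⟨c, hc, hcU⟩ := exists_isLocallyConstant_mem_cover hzd (U := U)
    (by rintro (_ | p); exacts [hO, (hV _).smul _]) fun x => by
      by_cases hx : x ∈ ⋃ j, towerSpan G X (V j) (S j)
      · obtain ⟨j, hj⟩ := mem_iUnion.1 hx
        obtain ⟨s, hs, hxs⟩ := mem_iUnion₂.1 hj
        exact ⟨some ⟨j, s, hs⟩, hxs⟩
      · exact ⟨none, hVO hx⟩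
  refine ⟨fun j => ⋃ s : S j, (s : G)⁻¹ • c ⁻¹' {some ⟨j, s⟩},
    fun j => isClopen_iUnion_of_finite fun s => (hc.isClopen_fiber _).smul _,
    fun j => iUnion_subset fun s => ?_, fun x hx => ?_⟩
  · rintro _ ⟨x, hx, rfl⟩
    have hxU := hcU x
    rw [show c x = _ from hx] at hxU
    exact mem_smul_set_iff_inv_smul_mem.1 hxU
  · have hxU := hcU x
    rcases hcx : c x with _ | ⟨j, s⟩
    · simpa [U, hcx] using hxU
    · refine (hx (mem_iUnion.2 ⟨j, mem_biUnion s.2 ⟨(s : G)⁻¹ • x, ?_, smul_inv_smul _ _⟩⟩)).elim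
      exact mem_iUnion.2 ⟨s, smul_mem_smul_set hcx⟩

theorem exists_clopen_bases_superset {J : Type} [Finite J] {V : J → Set X}
    {S S' : J → Finset G} (hV : ∀ j, IsOpen (V j)) (hc : IsCastle G X V S)
    (hS' : ∀ j, S' j ⊆ S j) {D : J → Set X} (hD : ∀ j, IsClopen (D j)) (hDV : ∀ j, D j ⊆ V j)
    {Z : Set X} (hZ : IsClopen Z) (hZV : Z ⊆ ⋃ j, towerSpan G X (V j) (S' j)) :
    ∃ Vb : J → Set X, (∀ j, IsClopen (Vb j)) ∧ (∀ j, D j ⊆ Vb j) ∧ (∀ j, Vb j ⊆ V j) ∧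
      Z ⊆ ⋃ j, towerSpan G X (Vb j) (S' j) := by
  let O : (Σ j, S' j) → Set X := fun p => (p.2 : G) • V p.1
  have hO : Pairwise (Disjoint on O) := by
    rintro ⟨j, t, ht⟩ ⟨j', t', ht'⟩ hne
    refine disjoint_left.2 ?_
    rintro _ ⟨y, hy, rfl⟩ ⟨y', hy', hyy'⟩
    obtain ⟨rfl, rfl⟩ :=
      isCastle_iff.1 hc j j' t (hS' j ht) t' (hS' j' ht') y hy y' hy' hyy'.symm
    exact hne rfl
  have hZO : Z ⊆ ⋃ p, O p := fun x hx => by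
    obtain ⟨j, hj⟩ := mem_iUnion.1 (hZV hx)
    obtain ⟨t, ht, hxt⟩ := mem_iUnion₂.1 hj
    exact mem_iUnion.2 ⟨⟨j, t, ht⟩, hxt⟩
  refine ⟨fun j => D j ∪ ⋃ t : S' j, (t : G)⁻¹ • (Z ∩ O ⟨j, t⟩), fun j => (hD j).union
    (isClopen_iUnion_of_finite fun t =>
      (hZ.inter_of_subset_iUnion (fun p : Σ j, S' j => (hV p.1).smul _) hO hZO _).smul _),
    fun j => subset_union_left, fun j => union_subset (hDV j) (iUnion_subset fun t => ?_), ?_⟩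
  · rw [← inv_smul_smul (t : G) (V j)]
    exact smul_set_mono inter_subset_right
  · intro x hx
    obtain ⟨⟨j, t⟩, hxt⟩ := mem_iUnion.1 (hZO hx)
    refine mem_iUnion.2 ⟨j, mem_biUnion t.2 ⟨(t : G)⁻¹ • x, ?_, smul_inv_smul _ _⟩⟩
    exact mem_union_right _ (mem_iUnion.2 ⟨t, smul_mem_smul_set ⟨hx, hxt⟩⟩)

theorem exists_clopen_castle_absorbing [CompactSpace X] [DecidableEq G] {J : Type} [Finite J]
    {V : J → Set X} {S S' : J → Finset G} (hV : ∀ j, IsClopen (V j)) (hc : IsCastle G X V S)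
    (hS' : ∀ j, S' j ⊆ S j) {γ : X → G} (hγ : IsLocallyConstant γ)
    (hinj : InjOn (fun x => γ x • x) (⋃ j, towerSpan G X (V j) (S j))ᶜ)
    (hmaps : MapsTo (fun x => γ x • x) (⋃ j, towerSpan G X (V j) (S j))ᶜ
      (⋃ j, towerSpan G X (V j) (S' j))) :
    ∃ (I : Type) (_ : Fintype I) (W : I → Set X) (T : I → Finset G),
      (∀ i, IsClopen (W i)) ∧ IsCastle G X W T ∧
      (∀ i, ∃ j, ∃ R : Finset G, T i = S j ∪ R ∧ R.card ≤ (S' j).card) ∧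
      (⋃ i, towerSpan G X (W i) (T i)) = univ := by
  classical
  set Ω := ⋃ j, towerSpan G X (V j) (S j)
  have hΩ : IsClopen Ω := isClopen_iUnion_of_finite fun j =>
    isClopen_biUnion_finset fun s _ => (hV j).smul s
  let Γ : Finset G := hγ.range_finite.toFinset
  -- `h ∈ R j y` records that the level `h • y` of the tower over `y` is a remainder point
  -- sent by the translation to the level `γ (h • y) * h ∈ S' j` over `y`.
  let R : J → X → Finset G := fun j y =>
    ((Γ ×ˢ S' j).image fun q => q.1⁻¹ * q.2).filter
      fun h => h • y ∈ Ωᶜ ∧ γ (h • y) * h ∈ S' j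
  have hR : ∀ j, IsLocallyConstant (R j) := fun j =>
    .finset_filter _ fun h _ => (IsLocallyConstant.comp₂ hΩ.compl.isLocallyConstant_mem hγ
      fun p a => p ∧ a * h ∈ S' j).comp_continuous (continuous_const_smul h)
  have hmemR : ∀ {j y h}, h ∈ R j y → h • y ∈ Ωᶜ ∧ γ (h • y) * h ∈ S' j :=
    fun hh => (Finset.mem_filter.1 hh).2
  have hS_mem : ∀ {j y s}, y ∈ V j → s ∈ S j → s • y ∈ Ω :=
    fun hy hs => mem_iUnion.2 ⟨_, mem_biUnion hs (smul_mem_smul_set hy)⟩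
  obtain ⟨I, _, W, T, hW, hcW, hWT, hspan⟩ :=
    exists_clopen_castle_of_isLocallyConstant hV hR (fun j r => S j ∪ r) <| by
      intro j j' y y' g g' hy hy' hg hg' hgy
      rcases Finset.mem_union.1 hg with hg | hg <;> rcases Finset.mem_union.1 hg' with hg' | hg'
      · exact isCastle_iff.1 hc j j' g hg g' hg' y hy y' hy' hgy
      · exact ((hmemR hg').1 (hgy ▸ hS_mem hy hg)).elim
      · exact ((hmemR hg).1 (hgy ▸ hS_mem hy' hg')).elim
      · obtain ⟨-, hgS'⟩ := hmemR hg
        obtain ⟨-, hgS''⟩ := hmemR hg'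
        rw [hgy] at hgS'
        obtain ⟨rfl, h⟩ := isCastle_iff.1 hc j j' _ (hS' j hgS') _ (hS' j' hgS'') y hy y' hy'
          (by rw [mul_smul, mul_smul, hgy])
        exact ⟨rfl, mul_left_cancel h⟩
  refine ⟨I, ‹_›, W, T, hW, hcW, fun i => ?_, eq_univ_of_forall fun x => ?_⟩
  · obtain ⟨j, y, -, hT⟩ := hWT i
    exact ⟨j, R j y, hT, card_filter_le_of_injOn hinj _ _ y⟩
  · by_cases hx : x ∈ Ω
    · obtain ⟨j, hj⟩ := mem_iUnion.1 hx
      obtain ⟨s, hs, y, hy, rfl⟩ := mem_iUnion₂.1 hj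
      exact hspan j y hy s (Finset.mem_union_left _ hs)
    · obtain ⟨j, hj⟩ := mem_iUnion.1 (hmaps hx)
      obtain ⟨t, ht, y, hy, hty⟩ := mem_iUnion₂.1 hj
      have hyx : ((γ x)⁻¹ * t) • y = x := by
        rw [mul_smul, inv_smul_eq_iff]
        exact hty
      refine hyx ▸ hspan j y hy _ (Finset.mem_union_right _ (Finset.mem_filter.2 ⟨?_, ?_⟩))
      · exact Finset.mem_image.2 ⟨(γ x, t), Finset.mem_product.2
          ⟨hγ.range_finite.mem_toFinset.2 (mem_range_self x), ht⟩, rfl⟩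
      · rw [hyx, mul_inv_cancel_left]
        exact ⟨hx, ht⟩

end ClopenCastle

section Metric

variable {G X : Type} [Group G] [MetricSpace X] [CompactSpace X] [MulAction G X]
  [ContinuousConstSMul G X]

theorem IsCastle.exists_refinement_diam_lt (hzd : ZeroDimensional X) {J : Type} [Finite J]
    {V : J → Set X} {S : J → Finset G} (hV : ∀ j, IsClopen (V j)) (hc : IsCastle G X V S)
    {δ : ℝ} (hδ : 0 < δ) :
    ∃ (I : Type) (_ : Fintype I) (W : I → Set X) (T : I → Finset G),
      (∀ i, IsClopen (W i)) ∧ IsCastle G X W T ∧ (∀ i, ∃ j, T i = S j) ∧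
      (∀ i, ∀ s ∈ T i, Metric.diam (s • W i) < δ) ∧
      (⋃ j, towerSpan G X (V j) (S j)) ⊆ ⋃ i, towerSpan G X (W i) (T i) := by
  let O : X → Set X := fun x => ⋂ (j) (s ∈ S j), (s • ·) ⁻¹' Metric.ball (s • x) (δ / 4)
  have hO : ∀ x, IsOpen (O x) := fun x => isOpen_iInter_of_finite fun j =>
    isOpen_biInter_finset fun s _ => Metric.isOpen_ball.preimage (continuous_const_smul s)
  obtain ⟨c, hc_lc, hcO⟩ := exists_isLocallyConstant_mem_cover hzd hO fun x =>
    ⟨x, mem_iInter₂.2 fun j s => mem_iInter.2 fun _ => Metric.mem_ball_self (by positivity)⟩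
  obtain ⟨I, _, W, T, hW, hcW, hWT, hspan⟩ :=
    exists_clopen_castle_of_isLocallyConstant hV (fun _ => hc_lc) (fun j _ => S j)
      fun j j' y y' g g' hy hy' hg hg' => isCastle_iff.1 hc j j' g hg g' hg' y hy y' hy'
  refine ⟨I, ‹_›, W, T, hW, hcW, fun i => ?_, fun i s hs => ?_, ?_⟩
  · obtain ⟨j, -, -, hT⟩ := hWT i
    exact ⟨j, hT⟩
  · obtain ⟨j, y, hWy, hT⟩ := hWT i
    rw [hT] at hs
    have hball : s • W i ⊆ Metric.ball (s • c y) (δ / 4) := by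
      rintro _ ⟨z, hz, rfl⟩
      have hzc : c z = c y := hWy hz
      have := hcO z
      rw [hzc] at this
      exact mem_iInter₂.1 this j s |> mem_iInter.1 <| hs
    calc Metric.diam (s • W i) ≤ Metric.diam (Metric.ball (s • c y) (δ / 4)) :=
          Metric.diam_mono hball Metric.isBounded_ball
      _ ≤ 2 * (δ / 4) := Metric.diam_ball (by positivity)
      _ < δ := by linarith
  · rintro x hx
    obtain ⟨j, hj⟩ := mem_iUnion.1 hx
    obtain ⟨s, hs, y, hy, rfl⟩ := mem_iUnion₂.1 hj
    exact hspan j y hy s hs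

variable [DecidableEq G]

theorem almostFinite_of_forall_clopen_castle (hzd : ZeroDimensional X)
    (h : ∀ (K : Finset G) (δ : ℝ), 0 < δ →
      ∃ (I : Type) (_ : Fintype I) (V : I → Set X) (S : I → Finset G),
        (∀ i, IsClopen (V i)) ∧ IsCastle G X V S ∧
        (∀ i, FolnerInv G K δ (S i)) ∧
        (⋃ i, towerSpan G X (V i) (S i)) = univ) :
    AlmostFinite G X := by
  intro n K δ hn hδ
  obtain ⟨J, _, V, S, hV, hc, hfol, hcov⟩ := h K δ hδ
  obtain ⟨I, _, W, T, hW, hcW, hT, hdiam, hspan⟩ := hc.exists_refinement_diam_lt hzd hV hδ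
  have hfolT : ∀ i, FolnerInv G K δ (T i) := fun i => by
    obtain ⟨j, hj⟩ := hT i
    exact hj ▸ hfol j
  have hcovW : (⋃ i, towerSpan G X (W i) (T i)) = univ := eq_univ_of_univ_subset (hcov ▸ hspan)
  refine ⟨I, ‹_›, W, T, fun _ => ∅, fun i => (hW i).isOpen, hcW, hfolT, hdiam,
    fun _ => Finset.empty_subset _, fun i => ?_, ?_⟩
  · have : (0 : ℝ) < (T i).card := by exact_mod_cast (hfolT i).1.card_pos
    simp only [Finset.card_empty, Nat.cast_zero]
    positivity
  · rw [hcovW, sdiff_self]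
    exact subEquivM_empty 0 _

theorem exists_clopen_castle_of_almostFinite (hzd : ZeroDimensional X) (haf : AlmostFinite G X)
    (K : Finset G) {δ : ℝ} (hδ : 0 < δ) :
    ∃ (I : Type) (_ : Fintype I) (V : I → Set X) (S : I → Finset G),
      (∀ i, IsClopen (V i)) ∧ IsCastle G X V S ∧
      (∀ i, FolnerInv G K δ (S i)) ∧
      (⋃ i, towerSpan G X (V i) (S i)) = univ := by
  set n := ⌈4 / δ⌉₊
  have hn : 0 < n := Nat.ceil_pos.2 (by positivity)
  have hnδ : 4 ≤ n * δ := (div_le_iff₀ hδ).1 (Nat.le_ceil _)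
  obtain ⟨J, _, V, S, S', hV, hc, hfol, -, hS', hS'card, hsub⟩ :=
    haf n K (δ / 2) hn (half_pos hδ)
  have hrem : IsClosed (univ \ ⋃ j, towerSpan G X (V j) (S j)) := by
    rw [← compl_eq_univ_sdiff]
    exact (isOpen_iUnion fun j => isOpen_biUnion fun s _ => (hV j).smul s).isClosed_compl
  obtain ⟨O, hO, hremO, htrans⟩ := hsub.exists_translation hzd hrem
  obtain ⟨D, hD, hDV, hDO⟩ :=
    exists_clopen_bases_compl_subset hzd hV hO (compl_eq_univ_sdiff _ ▸ hremO)
  obtain ⟨γ, Z, hγ, hZ, hZV, hinj, hmaps⟩ :=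
    htrans _ (isClopen_iUnion_towerSpan hD S).compl hDO
  obtain ⟨Vb, hVb, hDVb, hVbV, hZVb⟩ := exists_clopen_bases_superset hV hc hS' hD hDV hZ hZV
  have hVbD : (⋃ j, towerSpan G X (Vb j) (S j))ᶜ ⊆ (⋃ j, towerSpan G X (D j) (S j))ᶜ :=
    compl_subset_compl.2 (iUnion_mono fun j => towerSpan_mono (hDVb j) _)
  obtain ⟨I, _, W, T, hW, hcW, hT, hcov⟩ := exists_clopen_castle_absorbing hVb (hc.mono hVbV) hS'
    hγ (hinj.mono hVbD) ((hmaps.mono_left hVbD).mono_right hZVb)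
  refine ⟨I, ‹_›, W, T, hW, hcW, fun i => ?_, hcov⟩
  obtain ⟨j, R, hTR, hR⟩ := hT i
  rw [hTR]
  refine (hfol j).union ?_
  have hSn := hS'card j
  rw [lt_div_iff₀ (by positivity)] at hSn
  have : (R.card : ℝ) ≤ (S' j).card := by exact_mod_cast hR
  nlinarith

end Metric

theorem almostFinite_iff_clopen_castle_general
    (G X : Type) [Group G] [DecidableEq G]
    [MetricSpace X] [CompactSpace X]
    [MulAction G X] [ContinuousConstSMul G X]
    (hzd : ZeroDimensional X) :
    AlmostFinite G X ↔
      ∀ (K : Finset G) (δ : ℝ), 0 < δ →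
        ∃ (I : Type) (_ : Fintype I) (V : I → Set X) (S : I → Finset G),
          (∀ i, IsClopen (V i)) ∧ IsCastle G X V S ∧
          (∀ i, FolnerInv G K δ (S i)) ∧
          (⋃ i, towerSpan G X (V i) (S i)) = Set.univ :=
  ⟨fun haf K _ hδ => exists_clopen_castle_of_almostFinite hzd haf K hδ,
    almostFinite_of_forall_clopen_castle hzd⟩

/-- Theorem 10.2: a free action on a zero-dimensional compact metric space is
almost finite iff for every finite `K ⊆ G` and `δ > 0` there is a clopen castle with
`(K, δ)`-invariant shapes whose levels partition `X`. -/
theorem almostFinite_iff_clopen_castle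
    (G X : Type) [Group G] [Countable G] [DecidableEq G]
    [MetricSpace X] [CompactSpace X]
    [MulAction G X] [ContinuousConstSMul G X]
    (hfree : IsFreeAction G X) (hzd : ZeroDimensional X) :
    AlmostFinite G X ↔
      ∀ (K : Finset G) (δ : ℝ), 0 < δ →
        ∃ (I : Type) (_ : Fintype I) (V : I → Set X) (S : I → Finset G),
          (∀ i, IsClopen (V i)) ∧ IsCastle G X V S ∧
          (∀ i, FolnerInv G K δ (S i)) ∧
          (⋃ i, towerSpan G X (V i) (S i)) = Set.univ :=
  almostFinite_iff_clopen_castle_general G X hzd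

end Kerr
end
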